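/- arXiv:1902.06332 — 9 statements merged into one kernel-verified Lean document; each statement's English description precedes it below -/
import Mathlib

section
/- The s-Partition Encoding Scheme is unbiased: for every nonzero vector g ∈ ℝ^d and every positive integer s, the decoded random vector φ'(g) satisfies E[φ'(g) | g] = g. -/
open MeasureTheory ProbabilityTheory
open scoped ProbabilityTheory

theorem Real.sign_mul_abs (x : ℝ) : Real.sign x * |x| = x := by
  rcases lt_trichotomy x 0 with hx | rfl | hx
  · rw [Real.sign_of_neg hx, abs_of_neg hx]; ring
  · simp
  · rw [Real.sign_of_pos hx, abs_of_pos hx]; ring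

theorem integral_eq_of_two_valued {Ω : Type*} [MeasurableSpace Ω] (μ : Measure Ω)
    [IsProbabilityMeasure μ] {X : Ω → ℝ} (hX : Measurable X) {a b : ℝ}
    (hval : ∀ ω, X ω = a ∨ X ω = b) :
    ∫ ω, X ω ∂μ = a + (b - a) * μ.real {ω | X ω = b} := by
  set A := {ω | X ω = b}
  have hA : MeasurableSet A := hX (measurableSet_singleton b)
  have hX_eq : X = fun ω ↦ a + A.indicator (fun _ ↦ b - a) ω := by
    funext ω
    rcases hval ω with h | h
    · by_cases hω : ω ∈ A
      · rw [Set.indicator_of_mem hω, ← (hω : X ω = b)]; ring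
      · rw [Set.indicator_of_notMem hω, h, add_zero]
    · rw [Set.indicator_of_mem (show ω ∈ A from h), h]; ring
  rw [hX_eq, integral_add (integrable_const a) ((integrable_const _).indicator hA),
    integral_indicator_const _ hA, integral_const, probReal_univ, one_smul, smul_eq_mul,
    mul_comm]

theorem integral_eq_of_stochastic_rounding {Ω : Type*} [MeasurableSpace Ω] (μ : Measure Ω)
    [IsProbabilityMeasure μ] {X : Ω → ℝ} (hX : Measurable X) {l s t : ℝ} (hs : s ≠ 0)
    (hl : l ≤ s * t) (hval : ∀ ω, X ω = l / s ∨ X ω = (l + 1) / s)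
    (hup : μ {ω | X ω = (l + 1) / s} = ENNReal.ofReal (s * t - l)) :
    ∫ ω, X ω ∂μ = t := by
  have hup_real : μ.real {ω | X ω = (l + 1) / s} = s * t - l := by
    rw [measureReal_def, hup, ENNReal.toReal_ofReal (sub_nonneg.mpr hl)]
  rw [integral_eq_of_two_valued μ hX hval, hup_real]
  field_simp
  ring

theorem stmt0_general {Ω : Type*} [MeasureSpace Ω] [IsProbabilityMeasure (ℙ : Measure Ω)]
    {d : ℕ} (g : Fin d → ℝ) (hg : g ≠ 0) (s : ℕ) (hs : 0 < s)
    (l : Fin d → ℕ)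
    (hlo : ∀ i, (l i : ℝ) / s ≤ |g i| / ‖g‖)
    (b : Fin d → Ω → ℝ)
    (hbmeas : ∀ i, Measurable (b i))
    (hbval : ∀ i, ∀ ω, b i ω = (l i : ℝ) / s ∨ b i ω = ((l i : ℝ) + 1) / s)
    (hbhigh : ∀ i, ℙ {ω | b i ω = ((l i : ℝ) + 1) / s}
      = ENNReal.ofReal (s * (|g i| / ‖g‖) - l i)) :
    ∀ i, (∫ ω, Real.sign (g i) * b i ω * ‖g‖) = g i := by
  intro i
  have hs' : (0 : ℝ) < s := Nat.cast_pos.mpr hs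
  have hl : (l i : ℝ) ≤ s * (|g i| / ‖g‖) := by
    rw [← div_le_iff₀' hs']
    exact hlo i
  have hmean : ∫ ω, b i ω = |g i| / ‖g‖ :=
    integral_eq_of_stochastic_rounding ℙ (hbmeas i) hs'.ne' hl (hbval i) (hbhigh i)
  rw [integral_mul_const, integral_const_mul, hmean, mul_assoc,
    div_mul_cancel₀ _ (norm_ne_zero_iff.mpr hg), Real.sign_mul_abs]

/-- The s-Partition Encoding Scheme is unbiased.
For a nonzero vector `g : Fin d → ℝ` (here `‖g‖` is the sup norm, since `Fin d → ℝ`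
carries the `Pi` norm), a positive integer `s`, levels `l i < s` with
`l i / s ≤ |g i| / ‖g‖ ≤ (l i + 1) / s`, and random variables `b i` taking the value
`l i / s` with probability `1 - s·|g i|/‖g‖ + l i` and the value `(l i + 1)/s` with
probability `s·|g i|/‖g‖ - l i`, the decoded vector
`φ'(g) i = sign (g i) · b i · ‖g‖` satisfies `E[φ'(g)] = g` coordinatewise. -/
theorem stmt0 {Ω : Type*} [MeasureSpace Ω] [IsProbabilityMeasure (ℙ : Measure Ω)]
    {d : ℕ} (g : Fin d → ℝ) (hg : g ≠ 0) (s : ℕ) (hs : 0 < s)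
    (l : Fin d → ℕ) (hl : ∀ i, l i < s)
    (hlo : ∀ i, (l i : ℝ) / s ≤ |g i| / ‖g‖)
    (hhi : ∀ i, |g i| / ‖g‖ ≤ ((l i : ℝ) + 1) / s)
    (b : Fin d → Ω → ℝ)
    (hbmeas : ∀ i, Measurable (b i))
    (hbval : ∀ i, ∀ ω, b i ω = (l i : ℝ) / s ∨ b i ω = ((l i : ℝ) + 1) / s)
    (hblow : ∀ i, ℙ {ω | b i ω = (l i : ℝ) / s}
      = ENNReal.ofReal (1 - s * (|g i| / ‖g‖) + l i))
    (hbhigh : ∀ i, ℙ {ω | b i ω = ((l i : ℝ) + 1) / s}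
      = ENNReal.ofReal (s * (|g i| / ‖g‖) - l i)) :
    ∀ i, (∫ ω, Real.sign (g i) * b i ω * ‖g‖) = g i :=
  stmt0_general g hg s hs l hlo b hbmeas hbval hbhigh
end

section
/- (Lemma 2) For every nonzero vector g ∈ ℝ^d, the variance of the Sign Encoding Scheme is exactly Var[φ'(g) | g] = E[‖φ'(g) − g‖² | g] = ‖g‖₁·‖g‖_∞ − ‖g‖₂². -/
open MeasureTheory ProbabilityTheory
open scoped ProbabilityTheory

/-!
Each coordinate error `(sign(gᵢ) bᵢ ‖g‖∞ - gᵢ)²` is `f bᵢ` for a quadratic `f`, and `bᵢ` is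
`{0,1}`-valued, so its mean is `P[bᵢ = 1] · (f 1 - f 0) + f 0`. With `P[bᵢ = 1] = |gᵢ| / ‖g‖∞`
this is `|gᵢ| ‖g‖∞ - gᵢ²`; summing over `i` gives the claim by linearity of expectation.
-/

lemma comp_eq_indicator_add_of_forall_eq_zero_or_eq_one {Ω : Type*} {X : Ω → ℝ}
    (hX : ∀ ω, X ω = 0 ∨ X ω = 1) (f : ℝ → ℝ) :
    (fun ω => f (X ω)) = fun ω => {ω | X ω = 1}.indicator (fun _ => f 1 - f 0) ω + f 0 := by
  funext ω
  rcases hX ω with h | h <;> simp [h]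

section ZeroOneValued

variable {Ω : Type*} [MeasurableSpace Ω] {μ : Measure Ω} [IsFiniteMeasure μ] {X : Ω → ℝ}

lemma integrable_comp_of_forall_eq_zero_or_eq_one (hXm : Measurable X)
    (hX : ∀ ω, X ω = 0 ∨ X ω = 1) (f : ℝ → ℝ) : Integrable (fun ω => f (X ω)) μ := by
  rw [comp_eq_indicator_add_of_forall_eq_zero_or_eq_one hX]
  exact ((integrable_const _).indicator (hXm (measurableSet_singleton 1))).add
    (integrable_const _)

lemma integral_comp_of_forall_eq_zero_or_eq_one [IsProbabilityMeasure μ] (hXm : Measurable X)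
    (hX : ∀ ω, X ω = 0 ∨ X ω = 1) (f : ℝ → ℝ) :
    ∫ ω, f (X ω) ∂μ = μ.real {ω | X ω = 1} * (f 1 - f 0) + f 0 := by
  have hA : MeasurableSet {ω | X ω = 1} := hXm (measurableSet_singleton 1)
  rw [comp_eq_indicator_add_of_forall_eq_zero_or_eq_one hX,
    integral_add ((integrable_const _).indicator hA) (integrable_const _),
    integral_indicator_const _ hA, integral_const, probReal_univ, smul_eq_mul, one_smul]

end ZeroOneValued

lemma abs_div_mul_sign_mul_sub_sq_sub_sq {x M : ℝ} (hx : |x| ≤ M) :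
    |x| / M * ((Real.sign x * M - x) ^ 2 - x ^ 2) + x ^ 2 = |x| * M - x ^ 2 := by
  rcases lt_trichotomy x 0 with hneg | rfl | hpos
  · have hM : M ≠ 0 := by linarith [abs_pos.mpr hneg.ne]
    rw [Real.sign_of_neg hneg, abs_of_neg hneg]
    field_simp
    ring
  · simp
  · have hM : M ≠ 0 := by linarith [abs_pos.mpr hpos.ne']
    rw [Real.sign_of_pos hpos, abs_of_pos hpos]
    field_simp
    ring

theorem stmt2_general {Ω : Type*} [MeasureSpace Ω] [IsProbabilityMeasure (ℙ : Measure Ω)]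
    {d : ℕ} (g : Fin d → ℝ)
    (b : Fin d → Ω → ℝ)
    (hbmeas : ∀ i, Measurable (b i))
    (hbval : ∀ i, ∀ ω, b i ω = 0 ∨ b i ω = 1)
    (hbone : ∀ i, ℙ {ω | b i ω = 1} = ENNReal.ofReal (|g i| / ‖g‖)) :
    (∫ ω, ∑ i, (Real.sign (g i) * b i ω * ‖g‖ - g i) ^ 2)
      = (∑ i, |g i|) * ‖g‖ - ∑ i, (g i) ^ 2 := by
  have hcoord (i : Fin d) :
      ∫ ω, (Real.sign (g i) * b i ω * ‖g‖ - g i) ^ 2 = |g i| * ‖g‖ - g i ^ 2 := by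
    have hprob : (ℙ : Measure Ω).real {ω | b i ω = 1} = |g i| / ‖g‖ := by
      rw [measureReal_def, hbone i, ENNReal.toReal_ofReal (by positivity)]
    rw [integral_comp_of_forall_eq_zero_or_eq_one (hbmeas i) (hbval i)
      (fun t => (Real.sign (g i) * t * ‖g‖ - g i) ^ 2), hprob]
    simpa using abs_div_mul_sign_mul_sub_sq_sub_sq (norm_le_pi_norm g i)
  rw [integral_finsetSum _ fun i _ => integrable_comp_of_forall_eq_zero_or_eq_one (hbmeas i)
    (hbval i) fun t => (Real.sign (g i) * t * ‖g‖ - g i) ^ 2]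
  simp only [hcoord, Finset.sum_sub_distrib, Finset.sum_mul]

/-- Lemma 2: exact variance of the Sign Encoding Scheme.
For a nonzero vector `g : Fin d → ℝ` (here `‖g‖` is the ℓ∞ norm, since `Fin d → ℝ`
carries the `Pi` sup norm) and Bernoulli random variables `b i ∈ {0, 1}` with
`P[b i = 1] = |g i| / ‖g‖∞` and `P[b i = 0] = 1 - |g i| / ‖g‖∞`, the decoded vector
`φ'(g) i = sign (g i) · b i · ‖g‖∞` satisfies
`E[‖φ'(g) - g‖₂²] = ‖g‖₁ · ‖g‖∞ - ‖g‖₂²`. -/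
theorem stmt2 {Ω : Type*} [MeasureSpace Ω] [IsProbabilityMeasure (ℙ : Measure Ω)]
    {d : ℕ} (g : Fin d → ℝ) (hg : g ≠ 0)
    (b : Fin d → Ω → ℝ)
    (hbmeas : ∀ i, Measurable (b i))
    (hbval : ∀ i, ∀ ω, b i ω = 0 ∨ b i ω = 1)
    (hbone : ∀ i, ℙ {ω | b i ω = 1} = ENNReal.ofReal (|g i| / ‖g‖))
    (hbzero : ∀ i, ℙ {ω | b i ω = 0} = ENNReal.ofReal (1 - |g i| / ‖g‖)) :
    (∫ ω, ∑ i, (Real.sign (g i) * b i ω * ‖g‖ - g i) ^ 2)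
      = (∑ i, |g i|) * ‖g‖ - ∑ i, (g i) ^ 2 :=
  stmt2_general g b hbmeas hbval hbone
end

section
/- (Lemma 3, variance-reduction lemma) Let G ≥ 0, α ∈ (0,1], σ ≥ 0, and s ≥ 8^{1/(2α)} − 1. Let {a_t}_{t=0}^{T} be points in ℝ^n with a_0 = a_1 and ‖a_t − a_{t−1}‖ ≤ G/(t+s)^α for all 1 ≤ t ≤ T. Let {ã_t}_{t=1}^{T} be random vectors such that, with F_{t−1} the σ-field generated by ã_1,…,ã_{t−1} (F_0 trivial), E[ã_t | F_{t−1}] = a_t and E[‖ã_t − a_t‖² | F_{t−1}] ≤ σ² for every t ≥ 1. Define d_0 ∈ ℝ^n fixed and d_t = (1 − ρ_t)d_{t−1} + ρ_t ã_t with ρ_t = 2/(t+s)^{2α/3}. Then for every 0 ≤ t ≤ T, E[‖a_t − d_t‖²] ≤ Q/(t+s+1)^{2α/3}, where Q = max{ ‖a_0 − d_0‖²·(s+1)^{2α/3}, 4σ² + 2G² }. -/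
/-!
With `h = (t + s)^(2α/3)` the step size is `ρ t = 2 / h`, and
`a t - d t = (1 - ρ)(a t - d (t-1)) + ρ (a t - ã t)`. The first summand is `F (t-1)`-measurable
and the second has conditional mean zero, so their second moments add. Young's inequality with
weight `ρ` trades `a (t-1)` for `a t` at the cost of `(1 + 1/ρ)‖a t - a (t-1)‖²`, and
`‖a t - a (t-1)‖² ≤ G²/h³`, so `e t = E‖a t - d t‖²` satisfies
`e t ≤ (1 - 2/h) e (t-1) + (4σ² + 2G²)/h²`. Since `(x + 1)^p ≤ x^p + 1` for `p ≤ 1`, the bound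
`e t ≤ Q/(t + s + 1)^(2α/3)` then propagates by induction.
-/

open MeasureTheory ProbabilityTheory
open scoped ProbabilityTheory

theorem add_sq_le_one_add_mul_add_one_add_inv_mul {x y c : ℝ} (hc : 0 < c) :
    (x + y) ^ 2 ≤ (1 + c) * x ^ 2 + (1 + c⁻¹) * y ^ 2 := by
  have key : 0 ≤ (c * x - y) ^ 2 / c := by positivity
  have expand : (1 + c) * x ^ 2 + (1 + c⁻¹) * y ^ 2 - (x + y) ^ 2 = (c * x - y) ^ 2 / c := by
    field_simp; ring
  linarith

theorem norm_add_sq_le_one_add_mul_add_one_add_inv_mul {E : Type*} [SeminormedAddCommGroup E]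
    (u v : E) {c : ℝ} (hc : 0 < c) : ‖u + v‖ ^ 2 ≤ (1 + c) * ‖u‖ ^ 2 + (1 + c⁻¹) * ‖v‖ ^ 2 :=
  (pow_le_pow_left₀ (norm_nonneg _) (norm_add_le u v) 2).trans
    (add_sq_le_one_add_mul_add_one_add_inv_mul hc)

theorem sq_one_sub_mul_one_add_mul_add_le {ρ e K : ℝ} (hρ0 : 0 < ρ) (hρ1 : ρ ≤ 1)
    (he : 0 ≤ e) (hK : 0 ≤ K) :
    (1 - ρ) ^ 2 * ((1 + ρ) * e + (1 + ρ⁻¹) * K) ≤ (1 - ρ) * e + ρ⁻¹ * K := by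
  have h1 : (1 - ρ) ^ 2 * (1 + ρ) ≤ 1 - ρ := by nlinarith [mul_nonneg (sub_nonneg.2 hρ1) hρ0.le]
  have h2 : (1 - ρ) ^ 2 * (1 + ρ⁻¹) ≤ ρ⁻¹ := by
    rw [show (1 - ρ) ^ 2 * (1 + ρ⁻¹) = (1 - ρ) ^ 2 * (1 + ρ) * ρ⁻¹ by field_simp; ring]
    exact mul_le_of_le_one_left (by positivity) (h1.trans (by linarith))
  nlinarith [mul_le_mul_of_nonneg_right h1 he, mul_le_mul_of_nonneg_right h2 hK]

theorem one_sub_two_div_mul_add_div_sq_le {x p C Q e : ℝ} (hx : 0 ≤ x) (hp0 : 0 ≤ p)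
    (hp1 : p ≤ 1) (h2 : 2 ≤ x ^ p) (hC : 0 ≤ C) (hCQ : C ≤ Q) (he : e ≤ Q / x ^ p) :
    (1 - 2 / x ^ p) * e + C / (x ^ p) ^ 2 ≤ Q / (x + 1) ^ p := by
  set h := x ^ p
  have hh : 0 < h := by linarith
  have hsucc : (x + 1) ^ p ≤ h + 1 := by
    simpa using Real.rpow_add_le_add_rpow hx zero_le_one hp0 hp1
  have hsucc0 : 0 < (x + 1) ^ p := by positivity
  have hcoef : 0 ≤ 1 - 2 / h := by rw [sub_nonneg, div_le_one hh]; exact h2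
  calc (1 - 2 / h) * e + C / h ^ 2
      ≤ (1 - 2 / h) * (Q / h) + C / h ^ 2 := by gcongr
    _ ≤ Q * (h - 1) / h ^ 2 := by
      rw [show (1 - 2 / h) * (Q / h) + C / h ^ 2 = (Q * (h - 2) + C) / h ^ 2 by
        field_simp]
      gcongr
      linarith
    _ ≤ Q / (x + 1) ^ p := by
      rw [div_le_div_iff₀ (by positivity) hsucc0]
      nlinarith [mul_le_mul_of_nonneg_left hsucc (by linarith : (0:ℝ) ≤ h - 1)]

theorem two_le_rpow_of_eight_rpow_le {α x : ℝ} (hα : 0 < α) (hx : (8 : ℝ) ^ (1 / (2 * α)) ≤ x) :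
    2 ≤ x ^ (2 * α / 3) :=
  calc (2 : ℝ) = ((8 : ℝ) ^ (1 / (2 * α))) ^ (2 * α / 3) := by
        rw [← Real.rpow_mul (by norm_num), show 1 / (2 * α) * (2 * α / 3) = ((3 : ℕ) : ℝ)⁻¹ by
          field_simp; norm_num, show (8 : ℝ) = 2 ^ 3 by norm_num,
          Real.pow_rpow_inv_natCast (by norm_num) (by norm_num)]
    _ ≤ x ^ (2 * α / 3) := by gcongr

theorem rpow_sq_eq_rpow_two_mul_div_three_pow_three {x : ℝ} (hx : 0 ≤ x) (α : ℝ) :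
    (x ^ α) ^ 2 = (x ^ (2 * α / 3)) ^ 3 := by
  simp only [← Real.rpow_natCast, ← Real.rpow_mul hx]
  ring_nf

theorem two_div_inv_mul_add_two_div_sq_mul_le {h K V G σ : ℝ} (hh : 0 < h)
    (hK : K ≤ G ^ 2 / h ^ 3) (hV : V ≤ σ ^ 2) :
    (2 / h)⁻¹ * K + (2 / h) ^ 2 * V ≤ (4 * σ ^ 2 + 2 * G ^ 2) / h ^ 2 :=
  calc (2 / h)⁻¹ * K + (2 / h) ^ 2 * V ≤ (2 / h)⁻¹ * (G ^ 2 / h ^ 3) + (2 / h) ^ 2 * σ ^ 2 := by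
        gcongr
    _ = (4 * σ ^ 2 + G ^ 2 / 2) / h ^ 2 := by field_simp; ring
    _ ≤ (4 * σ ^ 2 + 2 * G ^ 2) / h ^ 2 := by gcongr; linarith [sq_nonneg G]

theorem le_div_rpow_of_recursion {e : ℕ → ℝ} {T : ℕ} {s p C Q : ℝ} (hs : 0 ≤ s) (hp0 : 0 ≤ p)
    (hp1 : p ≤ 1) (hbig : ∀ k : ℕ, 1 ≤ k → 2 ≤ ((k : ℝ) + s) ^ p) (hC : 0 ≤ C) (hCQ : C ≤ Q)
    (h0 : e 0 ≤ Q / (s + 1) ^ p)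
    (hstep : ∀ k, 1 ≤ k → k ≤ T →
      e k ≤ (1 - 2 / ((k : ℝ) + s) ^ p) * e (k - 1) + C / (((k : ℝ) + s) ^ p) ^ 2) :
    ∀ t ≤ T, e t ≤ Q / ((t : ℝ) + s + 1) ^ p := by
  intro t ht
  induction t with
  | zero => simpa using h0
  | succ t ih =>
    have hx : (0 : ℝ) ≤ t + 1 + s := by positivity
    have hrec := hstep (t + 1) (by omega) ht
    have hprev := ih (by omega)
    have hbig' : 2 ≤ ((t : ℝ) + 1 + s) ^ p := by exact_mod_cast hbig (t + 1) (by omega)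
    rw [Nat.add_sub_cancel] at hrec
    push_cast at hrec ⊢
    rw [add_right_comm] at hprev
    exact hrec.trans (one_sub_two_div_mul_add_div_sq_le hx hp0 hp1 hbig' hC hCQ hprev)

section Conditional

variable {Ω E : Type*} {m mΩ : MeasurableSpace Ω} {μ : Measure Ω}
  [NormedAddCommGroup E] [InnerProductSpace ℝ E]

theorem integrable_inner_of_memLp_two {f g : Ω → E} (hf : MemLp f 2 μ) (hg : MemLp g 2 μ) :
    Integrable (fun ω ↦ inner ℝ (f ω) (g ω)) μ :=
  memLp_one_iff_integrable.1 ((innerSL ℝ).memLp_of_bilin 1 hf hg)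

variable [CompleteSpace E]

theorem integral_inner_eq_zero_of_condExp_eq_zero [IsFiniteMeasure μ] (hm : m ≤ mΩ)
    {f g : Ω → E} (hf : StronglyMeasurable[m] f) (hf2 : MemLp f 2 μ) (hg2 : MemLp g 2 μ)
    (hg : μ[g | m] =ᵐ[μ] 0) : ∫ ω, inner ℝ (f ω) (g ω) ∂μ = 0 := by
  have hfg : Integrable (fun ω ↦ innerSL ℝ (f ω) (g ω)) μ := integrable_inner_of_memLp_two hf2 hg2
  calc ∫ ω, inner ℝ (f ω) (g ω) ∂μ = ∫ ω, μ[fun ω ↦ innerSL ℝ (f ω) (g ω) | m] ω ∂μ :=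
        (integral_condExp hm).symm
    _ = ∫ ω, innerSL ℝ (f ω) (μ[g | m] ω) ∂μ :=
        integral_congr_ae (condExp_bilin_of_stronglyMeasurable_left _ hf hfg
          (hg2.integrable one_le_two))
    _ = 0 := by
        rw [integral_congr_ae (g := fun _ ↦ (0 : ℝ))]
        · simp
        · filter_upwards [hg] with ω hω
          simp [hω]

theorem integral_norm_add_sq_of_condExp_eq_zero [IsFiniteMeasure μ] (hm : m ≤ mΩ)
    {f g : Ω → E} (hf : StronglyMeasurable[m] f) (hf2 : MemLp f 2 μ) (hg2 : MemLp g 2 μ)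
    (hg : μ[g | m] =ᵐ[μ] 0) :
    ∫ ω, ‖f ω + g ω‖ ^ 2 ∂μ = ∫ ω, ‖f ω‖ ^ 2 ∂μ + ∫ ω, ‖g ω‖ ^ 2 ∂μ := by
  have hf2' := hf2.integrable_norm_pow two_ne_zero
  have hg2' := hg2.integrable_norm_pow two_ne_zero
  have hfg := integrable_inner_of_memLp_two hf2 hg2
  have hsum : Integrable (fun ω ↦ ‖f ω‖ ^ 2 + 2 * inner ℝ (f ω) (g ω)) μ :=
    hf2'.add (hfg.const_mul 2)
  simp_rw [norm_add_sq_real]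
  rw [integral_add hsum hg2', integral_add hf2' (hfg.const_mul 2),
    integral_const_mul, integral_inner_eq_zero_of_condExp_eq_zero hm hf hf2 hg2 hg]
  ring

theorem integral_le_of_condExp_le [IsProbabilityMeasure μ] (hm : m ≤ mΩ) {f : Ω → ℝ}
    {c : ℝ} (hf : μ[f | m] ≤ᵐ[μ] fun _ ↦ c) : ∫ ω, f ω ∂μ ≤ c := by
  rw [← integral_condExp hm]
  simpa using integral_mono_ae integrable_condExp (integrable_const c) hf

end Conditional

theorem memLp_two_of_integrable_norm_sub_sq {Ω E : Type*} {mΩ : MeasurableSpace Ω}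
    {μ : Measure Ω} [IsFiniteMeasure μ] [NormedAddCommGroup E] {X : Ω → E} {c : E}
    (hX : AEStronglyMeasurable X μ) (hXc : Integrable (fun ω ↦ ‖X ω - c‖ ^ 2) μ) :
    MemLp X 2 μ := by
  have hcentered : MemLp (fun ω ↦ X ω - c) 2 μ :=
    (memLp_two_iff_integrable_sq_norm (hX.sub aestronglyMeasurable_const)).2 hXc
  simpa [Pi.add_def] using hcentered.add (memLp_const c)

section Step

variable {Ω E : Type*} {m mΩ : MeasurableSpace Ω} {μ : Measure Ω} [IsProbabilityMeasure μ]
  [NormedAddCommGroup E]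

theorem integral_norm_sub_sq_le_one_add_mul {D : Ω → E} (hD : MemLp D 2 μ) (a b : E) {c : ℝ}
    (hc : 0 < c) :
    ∫ ω, ‖b - D ω‖ ^ 2 ∂μ ≤ (1 + c) * ∫ ω, ‖a - D ω‖ ^ 2 ∂μ + (1 + c⁻¹) * ‖b - a‖ ^ 2 := by
  have hint : ∀ x : E, Integrable (fun ω ↦ ‖x - D ω‖ ^ 2) μ := fun x ↦
    ((memLp_const x).sub hD).integrable_norm_pow two_ne_zero
  calc ∫ ω, ‖b - D ω‖ ^ 2 ∂μ
      ≤ ∫ ω, ((1 + c) * ‖a - D ω‖ ^ 2 + (1 + c⁻¹) * ‖b - a‖ ^ 2) ∂μ := by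
        refine integral_mono (hint b) (((hint a).const_mul _).add (integrable_const _))
          fun ω ↦ ?_
        simpa using norm_add_sq_le_one_add_mul_add_one_add_inv_mul (a - D ω) (b - a) hc
    _ = (1 + c) * ∫ ω, ‖a - D ω‖ ^ 2 ∂μ + (1 + c⁻¹) * ‖b - a‖ ^ 2 := by
        rw [integral_add ((hint a).const_mul _) (integrable_const _), integral_const_mul,
          integral_const, probReal_univ, one_smul]

variable [InnerProductSpace ℝ E] [CompleteSpace E]

theorem integral_norm_sub_convex_comb_le (hm : m ≤ mΩ) {ρ : ℝ} (hρ0 : 0 < ρ) (hρ1 : ρ ≤ 1)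
    (a b : E) {D X : Ω → E} (hD : StronglyMeasurable[m] D) (hD2 : MemLp D 2 μ)
    (hX2 : MemLp X 2 μ) (hX : μ[X | m] =ᵐ[μ] fun _ ↦ b) :
    ∫ ω, ‖b - ((1 - ρ) • D ω + ρ • X ω)‖ ^ 2 ∂μ
      ≤ (1 - ρ) * ∫ ω, ‖a - D ω‖ ^ 2 ∂μ + ρ⁻¹ * ‖b - a‖ ^ 2
        + ρ ^ 2 * ∫ ω, ‖X ω - b‖ ^ 2 ∂μ := by
  have hcentered : μ[fun ω ↦ ρ • (b - X ω) | m] =ᵐ[μ] 0 := by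
    have hsmul : μ[fun ω ↦ ρ • (b - X ω) | m] =ᵐ[μ] ρ • μ[(fun _ ↦ b) - X | m] :=
      condExp_smul ρ _ m
    filter_upwards [hsmul, condExp_sub (integrable_const b) (hX2.integrable one_le_two) m, hX]
      with ω h1 h2 h3
    rw [h1, Pi.smul_apply, h2, Pi.sub_apply, condExp_const hm, h3, sub_self, smul_zero]
    rfl
  have hsplit : ∀ ω, b - ((1 - ρ) • D ω + ρ • X ω) = (1 - ρ) • (b - D ω) + ρ • (b - X ω) :=
    fun ω ↦ by module
  have hpyth := integral_norm_add_sq_of_condExp_eq_zero (f := fun ω ↦ (1 - ρ) • (b - D ω))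
    (g := fun ω ↦ ρ • (b - X ω)) hm
    ((stronglyMeasurable_const.sub hD).const_smul (1 - ρ))
    (((memLp_const b).sub hD2).const_smul (1 - ρ)) (((memLp_const b).sub hX2).const_smul ρ)
    hcentered
  have hyoung := integral_norm_sub_sq_le_one_add_mul hD2 a b hρ0
  have he : 0 ≤ ∫ ω, ‖a - D ω‖ ^ 2 ∂μ := integral_nonneg fun _ ↦ by positivity
  simp_rw [hsplit]
  rw [hpyth]
  have hflip : ∫ ω, ‖b - X ω‖ ^ 2 ∂μ = ∫ ω, ‖X ω - b‖ ^ 2 ∂μ := by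
    simp_rw [norm_sub_rev b]
  simp_rw [norm_smul, mul_pow, integral_const_mul, Real.norm_eq_abs, sq_abs]
  rw [hflip]
  have hK : 0 ≤ ‖b - a‖ ^ 2 := by positivity
  have hcontract := sq_one_sub_mul_one_add_mul_add_le hρ0 hρ1 he hK
  nlinarith [mul_le_mul_of_nonneg_left hyoung (sq_nonneg (1 - ρ))]

theorem integral_norm_sub_two_div_comb_le (hm : m ≤ mΩ) {h G σ : ℝ} (hh : 2 ≤ h) (a b : E)
    {D X : Ω → E} (hD : StronglyMeasurable[m] D) (hD2 : MemLp D 2 μ) (hX2 : MemLp X 2 μ)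
    (hX : μ[X | m] =ᵐ[μ] fun _ ↦ b) (hab : ‖b - a‖ ^ 2 ≤ G ^ 2 / h ^ 3)
    (hvar : μ[fun ω ↦ ‖X ω - b‖ ^ 2 | m] ≤ᵐ[μ] fun _ ↦ σ ^ 2) :
    ∫ ω, ‖b - ((1 - 2 / h) • D ω + (2 / h) • X ω)‖ ^ 2 ∂μ
      ≤ (1 - 2 / h) * ∫ ω, ‖a - D ω‖ ^ 2 ∂μ + (4 * σ ^ 2 + 2 * G ^ 2) / h ^ 2 := by
  have hstep := integral_norm_sub_convex_comb_le hm (by positivity)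
    ((div_le_one (by positivity)).2 hh) a b hD hD2 hX2 hX
  have hnoise := two_div_inv_mul_add_two_div_sq_mul_le (by positivity) hab
    (integral_le_of_condExp_le hm hvar)
  linarith

end Step

section Recursion

variable {Ω E : Type*} [NormedAddCommGroup E] [NormedSpace ℝ E]
  {T : ℕ} {ρ : ℕ → ℝ} {X d : ℕ → Ω → E} {d₀ : E}

theorem memLp_of_recursion [MeasurableSpace Ω] {μ : Measure Ω} [IsFiniteMeasure μ]
    {p : ENNReal}
    (hd0 : ∀ ω, d 0 ω = d₀)
    (hd : ∀ t, 1 ≤ t → t ≤ T → ∀ ω, d t ω = (1 - ρ t) • d (t - 1) ω + ρ t • X t ω)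
    (hX : ∀ t, 1 ≤ t → t ≤ T → MemLp (X t) p μ) : ∀ t ≤ T, MemLp (d t) p μ := by
  intro t ht
  induction t with
  | zero => simpa [funext hd0] using memLp_const d₀
  | succ t ih =>
    rw [funext (hd (t + 1) (by omega) ht)]
    exact ((ih (by omega)).const_smul _).add ((hX (t + 1) (by omega) ht).const_smul _)

theorem stronglyMeasurable_of_recursion {F : ℕ → MeasurableSpace Ω} (hF : Monotone F)
    (hd0 : ∀ ω, d 0 ω = d₀)
    (hd : ∀ t, 1 ≤ t → t ≤ T → ∀ ω, d t ω = (1 - ρ t) • d (t - 1) ω + ρ t • X t ω)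
    (hX : ∀ t, 1 ≤ t → t ≤ T → StronglyMeasurable[F t] (X t)) :
    ∀ t ≤ T, StronglyMeasurable[F t] (d t) := by
  intro t ht
  induction t with
  | zero => simpa [funext hd0] using stronglyMeasurable_const
  | succ t ih =>
    rw [funext (hd (t + 1) (by omega) ht)]
    exact (((ih (by omega)).mono (hF t.le_succ)).const_smul _).add
      ((hX (t + 1) (by omega) ht).const_smul _)

end Recursion

section PrefixSigmaAlgebra

variable {Ω E : Type*} [mE : MeasurableSpace E] (X : ℕ → Ω → E)

theorem monotone_iSup_comap :
    Monotone fun t ↦ ⨆ i ∈ Finset.range t, MeasurableSpace.comap (X (i + 1)) mE :=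
  fun _ _ huv ↦ biSup_mono fun _ hi ↦
    Finset.mem_range.2 ((Finset.mem_range.1 hi).trans_le huv)

variable {X}

theorem iSup_comap_le {mΩ : MeasurableSpace Ω} {T t : ℕ}
    (hX : ∀ t, 1 ≤ t → t ≤ T → Measurable (X t)) (ht : t ≤ T) :
    ⨆ i ∈ Finset.range t, MeasurableSpace.comap (X (i + 1)) mE ≤ mΩ :=
  iSup₂_le fun i hi ↦ (hX (i + 1) (by omega) (by simp at hi; omega)).comap_le

theorem stronglyMeasurable_iSup_comap [TopologicalSpace E]
    [TopologicalSpace.PseudoMetrizableSpace E] [SecondCountableTopology E]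
    [OpensMeasurableSpace E] {i t : ℕ} (hi : 1 ≤ i) (hit : i ≤ t) :
    StronglyMeasurable[⨆ j ∈ Finset.range t, MeasurableSpace.comap (X (j + 1)) mE] (X i) := by
  obtain ⟨j, rfl⟩ : ∃ j, i = j + 1 := ⟨i - 1, by omega⟩
  exact ((comap_measurable (X (j + 1))).mono
    (le_iSup₂_of_le j (by simp; omega) le_rfl) le_rfl).stronglyMeasurable

end PrefixSigmaAlgebra

theorem stmt3_general {Ω : Type*} [MeasureSpace Ω] [IsProbabilityMeasure (ℙ : Measure Ω)]
    {n : ℕ} (T : ℕ) (G α σ s : ℝ)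
    (hα : 0 < α) (hα1 : α ≤ 1)
    (hs : (8 : ℝ) ^ (1 / (2 * α)) - 1 ≤ s)
    (a : ℕ → EuclideanSpace ℝ (Fin n))
    (ha : ∀ t, 1 ≤ t → t ≤ T → ‖a t - a (t - 1)‖ ≤ G / ((t : ℝ) + s) ^ α)
    (atil : ℕ → Ω → EuclideanSpace ℝ (Fin n))
    (hmeas : ∀ t, 1 ≤ t → t ≤ T → Measurable (atil t))
    (hint : ∀ t, 1 ≤ t → t ≤ T → Integrable (atil t) ∧
      Integrable (fun ω => ‖atil t ω - a t‖ ^ 2))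
    (F : ℕ → MeasurableSpace Ω)
    (hF : ∀ t, F t = ⨆ i ∈ Finset.range t,
      MeasurableSpace.comap (atil (i + 1)) inferInstance)
    (hmean : ∀ t, 1 ≤ t → t ≤ T →
      condExp (F (t - 1)) ℙ (atil t) =ᵐ[ℙ] fun _ => a t)
    (hvar : ∀ t, 1 ≤ t → t ≤ T →
      condExp (F (t - 1)) ℙ (fun ω => ‖atil t ω - a t‖ ^ 2) ≤ᵐ[ℙ] fun _ => σ ^ 2)
    (ρ : ℕ → ℝ) (hρ : ∀ t, ρ t = 2 / ((t : ℝ) + s) ^ (2 * α / 3))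
    (d : ℕ → Ω → EuclideanSpace ℝ (Fin n)) (d₀ : EuclideanSpace ℝ (Fin n))
    (hd0 : ∀ ω, d 0 ω = d₀)
    (hd : ∀ t, 1 ≤ t → t ≤ T → ∀ ω, d t ω = (1 - ρ t) • d (t - 1) ω + ρ t • atil t ω)
    (Q : ℝ) (hQ : Q = max (‖a 0 - d₀‖ ^ 2 * (s + 1) ^ (2 * α / 3)) (4 * σ ^ 2 + 2 * G ^ 2)) :
    ∀ t ≤ T, (∫ ω, ‖a t - d t ω‖ ^ 2) ≤ Q / ((t : ℝ) + s + 1) ^ (2 * α / 3) := by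
  set p := 2 * α / 3
  have hs0 : 0 ≤ s := by
    linarith [Real.one_le_rpow (by norm_num : (1 : ℝ) ≤ 8) (by positivity : 0 ≤ 1 / (2 * α))]
  have hbig : ∀ k : ℕ, 1 ≤ k → 2 ≤ ((k : ℝ) + s) ^ p := fun k hk ↦
    two_le_rpow_of_eight_rpow_le hα (by linarith [(Nat.one_le_cast (α := ℝ)).2 hk])
  have hX2 : ∀ t, 1 ≤ t → t ≤ T → MemLp (atil t) 2 ℙ := fun t h1 h2 ↦
    memLp_two_of_integrable_norm_sub_sq (hmeas t h1 h2).aestronglyMeasurable (hint t h1 h2).2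
  have hd2 := memLp_of_recursion hd0 hd hX2
  have hdF := stronglyMeasurable_of_recursion (F := F)
    (by simpa [funext hF] using monotone_iSup_comap atil) hd0 hd
    fun t h1 _ ↦ by rw [hF]; exact stronglyMeasurable_iSup_comap h1 le_rfl
  refine le_div_rpow_of_recursion (C := 4 * σ ^ 2 + 2 * G ^ 2) hs0 (by positivity)
    (by unfold p; linarith) hbig (by positivity) (hQ ▸ le_max_right _ _) ?_ fun k hk1 hkT ↦ ?_
  · simp only [hd0, integral_const, probReal_univ, one_smul]
    rw [le_div_iff₀ (by positivity), hQ]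
    exact le_max_left _ _
  set h := ((k : ℝ) + s) ^ p
  have hm : F (k - 1) ≤ (inferInstance : MeasurableSpace Ω) := by
    rw [hF]; exact iSup_comap_le hmeas (by omega)
  have hdrift : ‖a k - a (k - 1)‖ ^ 2 ≤ G ^ 2 / h ^ 3 :=
    calc ‖a k - a (k - 1)‖ ^ 2 ≤ (G / ((k : ℝ) + s) ^ α) ^ 2 :=
          pow_le_pow_left₀ (norm_nonneg _) (ha k hk1 hkT) 2
      _ = G ^ 2 / h ^ 3 := by
          rw [div_pow, rpow_sq_eq_rpow_two_mul_div_three_pow_three (by positivity)]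
  simp_rw [hd k hk1 hkT, hρ k]
  exact integral_norm_sub_two_div_comb_le hm (hbig k hk1) (a (k - 1)) (a k)
    (hdF (k - 1) (by omega)) (hd2 (k - 1) (by omega)) (hX2 k hk1 hkT) (hmean k hk1 hkT) hdrift
    (hvar k hk1 hkT)

/-- Lemma 3, variance-reduction lemma. Let `G ≥ 0`, `α ∈ (0,1]`, `σ ≥ 0`,
`s ≥ 8^(1/(2α)) - 1`. Let `a : ℕ → ℝ^n` with `a 0 = a 1` and
`‖a t - a (t-1)‖ ≤ G/(t+s)^α` for `1 ≤ t ≤ T`. Let `ã t` be random vectors such that,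
with `F (t-1)` the σ-field generated by `ã 1, …, ã (t-1)` (`F 0` trivial),
`E[ã t | F (t-1)] = a t` and `E[‖ã t - a t‖² | F (t-1)] ≤ σ²` for `1 ≤ t ≤ T`.
Define `d 0 = d₀` and `d t = (1 - ρ t) • d (t-1) + ρ t • ã t` with `ρ t = 2/(t+s)^(2α/3)`.
Then for every `t ≤ T`, `E[‖a t - d t‖²] ≤ Q/(t+s+1)^(2α/3)` where
`Q = max (‖a 0 - d₀‖²·(s+1)^(2α/3)) (4σ² + 2G²)`. -/
theorem stmt3 {Ω : Type*} [MeasureSpace Ω] [IsProbabilityMeasure (ℙ : Measure Ω)]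
    {n : ℕ} (T : ℕ) (G α σ s : ℝ)
    (hG : 0 ≤ G) (hα : 0 < α) (hα1 : α ≤ 1) (hσ : 0 ≤ σ)
    (hs : (8 : ℝ) ^ (1 / (2 * α)) - 1 ≤ s)
    (a : ℕ → EuclideanSpace ℝ (Fin n))
    (ha01 : a 0 = a 1)
    (ha : ∀ t, 1 ≤ t → t ≤ T → ‖a t - a (t - 1)‖ ≤ G / ((t : ℝ) + s) ^ α)
    (atil : ℕ → Ω → EuclideanSpace ℝ (Fin n))
    (hmeas : ∀ t, 1 ≤ t → t ≤ T → Measurable (atil t))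
    (hint : ∀ t, 1 ≤ t → t ≤ T → Integrable (atil t) ∧
      Integrable (fun ω => ‖atil t ω - a t‖ ^ 2))
    (F : ℕ → MeasurableSpace Ω)
    (hF : ∀ t, F t = ⨆ i ∈ Finset.range t,
      MeasurableSpace.comap (atil (i + 1)) inferInstance)
    (hmean : ∀ t, 1 ≤ t → t ≤ T →
      condExp (F (t - 1)) ℙ (atil t) =ᵐ[ℙ] fun _ => a t)
    (hvar : ∀ t, 1 ≤ t → t ≤ T →
      condExp (F (t - 1)) ℙ (fun ω => ‖atil t ω - a t‖ ^ 2) ≤ᵐ[ℙ] fun _ => σ ^ 2)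
    (ρ : ℕ → ℝ) (hρ : ∀ t, ρ t = 2 / ((t : ℝ) + s) ^ (2 * α / 3))
    (d : ℕ → Ω → EuclideanSpace ℝ (Fin n)) (d₀ : EuclideanSpace ℝ (Fin n))
    (hd0 : ∀ ω, d 0 ω = d₀)
    (hd : ∀ t, 1 ≤ t → t ≤ T → ∀ ω, d t ω = (1 - ρ t) • d (t - 1) ω + ρ t • atil t ω)
    (Q : ℝ) (hQ : Q = max (‖a 0 - d₀‖ ^ 2 * (s + 1) ^ (2 * α / 3)) (4 * σ ^ 2 + 2 * G ^ 2)) :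
    ∀ t ≤ T, (∫ ω, ‖a t - d t ω‖ ^ 2) ≤ Q / ((t : ℝ) + s + 1) ^ (2 * α / 3) :=
  stmt3_general T G α σ s hα hα1 hs a ha atil hmeas hint F hF hmean hvar ρ hρ d d₀ hd0 hd Q hQ
end

section
/- (Deterministic recursion in the proof of Lemma 3) Let α ∈ (0,1], s ≥ 8^{1/(2α)} − 1, and Q ≥ 0. Suppose {z_t}_{t=0}^{T} are nonnegative reals with z_0 ≤ Q/(s+1)^{2α/3} and, for every 1 ≤ t ≤ T, z_t ≤ (1 − 2/(t+s)^{2α/3})·z_{t−1} + Q/(t+s)^{4α/3}. Then z_t ≤ Q/(t+s+1)^{2α/3} for every 0 ≤ t ≤ T. -/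
/-- deterministic recursion in the proof of Lemma 3. Let `α ∈ (0,1]`,
`s ≥ 8^(1/(2α)) - 1`, `Q ≥ 0`. If `z t ≥ 0` for `t ≤ T`, `z 0 ≤ Q/(s+1)^(2α/3)`, and
`z t ≤ (1 - 2/(t+s)^(2α/3))·z (t-1) + Q/(t+s)^(4α/3)` for `1 ≤ t ≤ T`, then
`z t ≤ Q/(t+s+1)^(2α/3)` for every `t ≤ T`. -/
theorem stmt4 (α s Q : ℝ) (hα : 0 < α) (hα1 : α ≤ 1)
    (hs : (8 : ℝ) ^ (1 / (2 * α)) - 1 ≤ s) (hQ : 0 ≤ Q)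
    (T : ℕ) (z : ℕ → ℝ) (hz : ∀ t ≤ T, 0 ≤ z t)
    (h0 : z 0 ≤ Q / (s + 1) ^ (2 * α / 3))
    (hrec : ∀ t, 1 ≤ t → t ≤ T →
      z t ≤ (1 - 2 / ((t : ℝ) + s) ^ (2 * α / 3)) * z (t - 1)
        + Q / ((t : ℝ) + s) ^ (4 * α / 3)) :
    ∀ t ≤ T, z t ≤ Q / ((t : ℝ) + s + 1) ^ (2 * α / 3) := by
  have h8 : (1:ℝ) ≤ (8:ℝ) ^ (1 / (2 * α)) :=
    Real.one_le_rpow (by norm_num) (by positivity)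
  have hs0 : (0:ℝ) ≤ s := by linarith
  have hβ0 : 0 < 2 * α / 3 := by positivity
  have hβ1 : 2 * α / 3 ≤ 1 := by linarith
  -- (s+1)^β ≥ 2
  have hkey : (2:ℝ) ≤ (s + 1) ^ (2 * α / 3) := by
    have h1 : ((8:ℝ) ^ (1 / (2 * α))) ^ (2 * α / 3) ≤ (s + 1) ^ (2 * α / 3) :=
      Real.rpow_le_rpow (by positivity) (by linarith) hβ0.le
    have h2 : ((8:ℝ) ^ (1 / (2 * α))) ^ (2 * α / 3) = (8:ℝ) ^ ((1:ℝ)/3) := by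
      rw [← Real.rpow_mul (by norm_num)]
      congr 1
      field_simp
    have h3 : (8:ℝ) ^ ((1:ℝ)/3) = 2 := by
      have : (8:ℝ) = (2:ℝ) ^ (3:ℝ) := by
        rw [show (3:ℝ) = ((3:ℕ):ℝ) by norm_num, Real.rpow_natCast]; norm_num
      rw [this, ← Real.rpow_mul (by norm_num)]
      norm_num
    rw [h2, h3] at h1
    exact h1
  intro t htT
  induction t with
  | zero =>
    simpa using h0
  | succ n ih =>
    have hnT : n ≤ T := Nat.le_of_succ_le htT
    have ihn := ih hnT
    set a : ℝ := (n:ℝ) + s + 1 with ha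
    have ha0 : (0:ℝ) < a := by positivity
    have hA2 : (2:ℝ) ≤ a ^ (2 * α / 3) :=
      le_trans hkey (Real.rpow_le_rpow (by linarith) (by simp [ha]) hβ0.le)
    have hA0 : (0:ℝ) < a ^ (2 * α / 3) := by positivity
    have hB0 : (0:ℝ) < (a + 1) ^ (2 * α / 3) := by positivity
    -- subadditivity : (a+1)^β ≤ a^β + 1
    have hBle : (a + 1) ^ (2 * α / 3) ≤ a ^ (2 * α / 3) + 1 := by
      have h := NNReal.rpow_add_le_add_rpow (Real.toNNReal a) 1 hβ0.le hβ1
      have h' : ((Real.toNNReal a + 1 : NNReal) : ℝ) ^ (2 * α / 3)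
          ≤ ((Real.toNNReal a : NNReal) : ℝ) ^ (2 * α / 3) + ((1:NNReal) : ℝ) ^ (2 * α / 3) := by
        have := NNReal.coe_le_coe.2 h
        simpa [NNReal.coe_rpow] using this
      simpa [Real.coe_toNNReal a ha0.le] using h'
    have hcast : ((n + 1 : ℕ) : ℝ) + s = a := by push_cast [ha]; ring
    have hrec' := hrec (n + 1) (Nat.succ_le_succ (Nat.zero_le n)) htT
    rw [hcast] at hrec'
    simp only [Nat.add_sub_cancel] at hrec'
    have hcast2 : ((n + 1 : ℕ) : ℝ) + s + 1 = a + 1 := by rw [hcast]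
    rw [hcast2]
    have hfac : (0:ℝ) ≤ 1 - 2 / a ^ (2 * α / 3) := by
      have : 2 / a ^ (2 * α / 3) ≤ 1 := by
        rw [div_le_one hA0]; exact hA2
      linarith
    have hzn : z n ≤ Q / a ^ (2 * α / 3) := ihn
    have hpow : a ^ (4 * α / 3) = a ^ (2 * α / 3) * a ^ (2 * α / 3) := by
      rw [← Real.rpow_add ha0]; congr 1; ring
    rw [hpow] at hrec'
    set A : ℝ := a ^ (2 * α / 3)
    set B : ℝ := (a + 1) ^ (2 * α / 3)
    have step1 : z (n + 1) ≤ (1 - 2 / A) * (Q / A) + Q / (A * A) := by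
      calc z (n + 1) ≤ (1 - 2 / A) * z n + Q / (A * A) := hrec'
        _ ≤ (1 - 2 / A) * (Q / A) + Q / (A * A) := by
            gcongr
    have step2 : (1 - 2 / A) * (Q / A) + Q / (A * A) ≤ Q / B := by
      have heq : (1 - 2 / A) * (Q / A) + Q / (A * A) = Q * (A - 1) / (A * A) := by
        field_simp
        ring
      rw [heq, div_le_div_iff₀ (by positivity) hB0]
      nlinarith [mul_nonneg hQ (sub_nonneg.2 (by linarith : (1:ℝ) ≤ A))]
    linarith
end

section
/- (Per-iteration inequality for Frank-Wolfe with an inexact gradient, convex case) Let K ⊆ ℝ^d be a convex compact set with diameter D = sup_{x,y∈K} ‖x−y‖. Let f : ℝ^d → ℝ be convex, differentiable, with L-Lipschitz gradient on K, and let x* be a minimizer of f over K. Let x ∈ K, let ḡ ∈ ℝ^d be arbitrary, let v ∈ K satisfy ⟨v, ḡ⟩ ≤ ⟨u, ḡ⟩ for all u ∈ K, let η ∈ [0,1], and set x⁺ = x + η(v − x). Then f(x⁺) − f(x*) ≤ (1 − η)(f(x) − f(x*)) + η·D·‖∇f(x) − ḡ‖ + (L/2)·η²·D². -/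
/-!
The step `x⁺ = x + η (v - x)` is analysed with the descent lemma for `L`-smooth functions,
`f x⁺ ≤ f x + η ⟪∇f x, v - x⟫ + (L/2) η² ‖v - x‖²`. Since `v` minimizes `⟪·, ḡ⟫` over `K`,
replacing the exact gradient by `ḡ` costs at most `‖∇f x - ḡ‖ ‖v - x*‖ ≤ D ‖∇f x - ḡ‖` in the
linear term, so `⟪∇f x, v - x⟫ ≤ ⟪∇f x, x* - x⟫ + D ‖∇f x - ḡ‖`, and the first-order
characterization of convexity bounds `⟪∇f x, x* - x⟫` by `f x* - f x`.
-/

open scoped RealInnerProductSpace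

open AffineMap

section LinearMinimizer

variable {E : Type*} [NormedAddCommGroup E] [InnerProductSpace ℝ E]

theorem inner_sub_le_of_inner_le {g gbar u v : E} (x : E) (hv : ⟪v, gbar⟫ ≤ ⟪u, gbar⟫) :
    ⟪g, v - x⟫ ≤ ⟪g, u - x⟫ + ‖g - gbar‖ * ‖v - u‖ := by
  have hsplit : ⟪g, v - x⟫ = ⟪g, u - x⟫ + ⟪g - gbar, v - u⟫ + (⟪v, gbar⟫ - ⟪u, gbar⟫) := by
    simp only [inner_sub_left, inner_sub_right, real_inner_comm gbar]
    ring
  linarith [real_inner_le_norm (g - gbar) (v - u)]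

end LinearMinimizer

theorem nonneg_or_subsingleton_of_norm_sub_le_mul {E F : Type*} [NormedAddCommGroup E]
    [SeminormedAddCommGroup F] {K : Set E} {g : E → F} {L : ℝ}
    (hg : ∀ a ∈ K, ∀ b ∈ K, ‖g a - g b‖ ≤ L * ‖a - b‖) : 0 ≤ L ∨ K.Subsingleton := by
  refine or_iff_not_imp_right.2 fun hK => ?_
  obtain ⟨a, ha, b, hb, hab⟩ := Set.not_subsingleton_iff.1 hK
  have hpos : 0 < ‖a - b‖ := norm_pos_iff.2 (sub_ne_zero.2 hab)
  nlinarith [norm_nonneg (g a - g b), hg a ha b hb]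

section Gradient

variable {E : Type*} [NormedAddCommGroup E] [InnerProductSpace ℝ E] [CompleteSpace E]
  {f : E → ℝ} {K : Set E} {x y : E}

theorem HasGradientAt.hasDerivAt_comp_lineMap {g : E} {t : ℝ}
    (h : HasGradientAt f g (lineMap x y t)) :
    HasDerivAt (fun s : ℝ => f (lineMap x y s)) ⟪g, y - x⟫ t :=
  h.hasFDerivAt.comp_hasDerivAt t hasDerivAt_lineMap

theorem ConvexOn.inner_gradient_sub_le (hf : ConvexOn ℝ K f) (hfx : DifferentiableAt ℝ f x)
    (hx : x ∈ K) (hy : y ∈ K) : ⟪gradient f x, y - x⟫ ≤ f y - f x := by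
  have hline : ConvexOn ℝ ((lineMap x y : ℝ → E) ⁻¹' K) (fun t : ℝ => f (lineMap x y t)) :=
    hf.comp_affineMap _
  have hderiv : HasDerivAt (fun t : ℝ => f (lineMap x y t)) ⟪gradient f x, y - x⟫ 0 :=
    HasGradientAt.hasDerivAt_comp_lineMap (by simpa using hfx.hasGradientAt)
  simpa [slope_def_field] using
    hline.le_slope_of_hasDerivAt (by simpa) (by simpa) zero_lt_one hderiv

theorem Convex.inner_gradient_lineMap_sub_le (hK : Convex ℝ K) {L : ℝ}
    (hL : ∀ a ∈ K, ∀ b ∈ K, ‖gradient f a - gradient f b‖ ≤ L * ‖a - b‖)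
    (hx : x ∈ K) (hy : y ∈ K) {t : ℝ} (ht : t ∈ Set.Icc 0 1) :
    ⟪gradient f (lineMap x y t) - gradient f x, y - x⟫ ≤ L * t * ‖y - x‖ ^ 2 := by
  have hmem : lineMap x y t ∈ K := hK.lineMap_mem hx hy ht
  have hdist : ‖lineMap x y t - x‖ = t * ‖y - x‖ := by
    rw [lineMap_apply_module', add_sub_cancel_right, norm_smul, Real.norm_of_nonneg ht.1]
  calc _ ≤ ‖gradient f (lineMap x y t) - gradient f x‖ * ‖y - x‖ := real_inner_le_norm _ _
    _ ≤ L * ‖lineMap x y t - x‖ * ‖y - x‖ := by gcongr; exact hL _ hmem _ hx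
    _ = L * t * ‖y - x‖ ^ 2 := by rw [hdist]; ring

theorem Convex.le_add_inner_gradient_add_mul_sq_norm_sub (hK : Convex ℝ K)
    (hf : Differentiable ℝ f) {L : ℝ}
    (hL : ∀ a ∈ K, ∀ b ∈ K, ‖gradient f a - gradient f b‖ ≤ L * ‖a - b‖)
    (hx : x ∈ K) (hy : y ∈ K) :
    f y ≤ f x + ⟪gradient f x, y - x⟫ + L / 2 * ‖y - x‖ ^ 2 := by
  set φ : ℝ → ℝ := fun t =>
    f (lineMap x y t) - t * ⟪gradient f x, y - x⟫ - L / 2 * t ^ 2 * ‖y - x‖ ^ 2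
  have hderiv : ∀ t, HasDerivAt φ (⟪gradient f (lineMap x y t), y - x⟫
      - ⟪gradient f x, y - x⟫ - L * t * ‖y - x‖ ^ 2) t := by
    intro t
    have h₁ := (hf (lineMap x y t)).hasGradientAt.hasDerivAt_comp_lineMap
    have h₂ := (hasDerivAt_id t).mul_const ⟪gradient f x, y - x⟫
    have h₃ := ((hasDerivAt_pow 2 t).const_mul (L / 2)).mul_const (‖y - x‖ ^ 2)
    refine ((h₁.sub h₂).sub h₃).congr_deriv ?_
    push_cast
    ring
  have hanti : AntitoneOn φ (Set.Icc 0 1) := by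
    refine antitoneOn_of_hasDerivWithinAt_nonpos (convex_Icc 0 1)
      (fun t _ => (hderiv t).continuousAt.continuousWithinAt)
      (fun t _ => (hderiv t).hasDerivWithinAt) fun t ht => ?_
    rw [interior_Icc] at ht
    have := hK.inner_gradient_lineMap_sub_le hL hx hy (Set.Ioo_subset_Icc_self ht)
    rw [inner_sub_left] at this
    linarith
  have := hanti (Set.left_mem_Icc.2 zero_le_one) (Set.right_mem_Icc.2 zero_le_one) zero_le_one
  simp only [φ, lineMap_apply_zero, lineMap_apply_one] at this
  linarith

end Gradient

theorem stmt5_general {d : ℕ} (K : Set (EuclideanSpace ℝ (Fin d)))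
    (hKconv : Convex ℝ K) (hKcomp : IsCompact K)
    (D L : ℝ) (hD : D = Metric.diam K)
    (f : EuclideanSpace ℝ (Fin d) → ℝ)
    (hconv : ConvexOn ℝ K f)
    (hdiff : Differentiable ℝ f)
    (hsmooth : ∀ x ∈ K, ∀ y ∈ K, ‖gradient f x - gradient f y‖ ≤ L * ‖x - y‖)
    (xstar : EuclideanSpace ℝ (Fin d)) (hxstarK : xstar ∈ K)
    (x : EuclideanSpace ℝ (Fin d)) (hx : x ∈ K)
    (gbar : EuclideanSpace ℝ (Fin d))
    (v : EuclideanSpace ℝ (Fin d)) (hv : v ∈ K)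
    (hvopt : ∀ u ∈ K, ⟪v, gbar⟫ ≤ ⟪u, gbar⟫)
    (η : ℝ) (hη0 : 0 ≤ η) (hη1 : η ≤ 1)
    (xplus : EuclideanSpace ℝ (Fin d)) (hxplus : xplus = x + η • (v - x)) :
    f xplus - f xstar ≤ (1 - η) * (f x - f xstar)
      + η * D * ‖gradient f x - gbar‖ + L / 2 * η ^ 2 * D ^ 2 := by
  subst hxplus
  have hdiam : ∀ a ∈ K, ∀ b ∈ K, ‖a - b‖ ≤ D := fun a ha b hb => by
    rw [hD, ← dist_eq_norm]
    exact Metric.dist_le_diam_of_mem hKcomp.isBounded ha hb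
  have hdescent := hKconv.le_add_inner_gradient_add_mul_sq_norm_sub hdiff hsmooth hx
    (hKconv.add_smul_sub_mem hx hv ⟨hη0, hη1⟩)
  rw [add_sub_cancel_left, real_inner_smul_right, norm_smul, Real.norm_of_nonneg hη0]
    at hdescent
  have hlinear : ⟪gradient f x, v - x⟫ ≤ f xstar - f x + ‖gradient f x - gbar‖ * D := by
    have := mul_le_mul_of_nonneg_left (hdiam v hv xstar hxstarK)
      (norm_nonneg (gradient f x - gbar))
    linarith [inner_sub_le_of_inner_le (g := gradient f x) x (hvopt xstar hxstarK),
      hconv.inner_gradient_sub_le (hdiff x) hx hxstarK]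
  have hquadratic : L * ‖v - x‖ ^ 2 ≤ L * D ^ 2 := by
    rcases nonneg_or_subsingleton_of_norm_sub_le_mul hsmooth with hL | hK
    · gcongr
      exact hdiam v hv x hx
    · simp [hK hv hx, hD, Metric.diam_subsingleton hK]
  calc f (x + η • (v - x)) - f xstar
      ≤ f x - f xstar + η * ⟪gradient f x, v - x⟫ + L / 2 * η ^ 2 * ‖v - x‖ ^ 2 := by
        linear_combination hdescent
    _ ≤ f x - f xstar + η * (f xstar - f x + ‖gradient f x - gbar‖ * D)
        + L / 2 * η ^ 2 * D ^ 2 := by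
        linear_combination η * hlinear + η ^ 2 / 2 * hquadratic
    _ = (1 - η) * (f x - f xstar) + η * D * ‖gradient f x - gbar‖ + L / 2 * η ^ 2 * D ^ 2 := by
        ring

/-- per-iteration inequality for Frank-Wolfe with an inexact gradient,
convex case. `K ⊆ ℝ^d` convex compact with diameter `D`, `f` convex and differentiable
with `L`-Lipschitz gradient on `K`, `x*` a minimizer of `f` over `K`, `x ∈ K`,
`v ∈ K` a linear minimizer for `ḡ`, `η ∈ [0,1]`, `x⁺ = x + η(v - x)`. Then
`f x⁺ - f x* ≤ (1-η)(f x - f x*) + η·D·‖∇f x - ḡ‖ + (L/2)·η²·D²`. -/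
theorem stmt5 {d : ℕ} (K : Set (EuclideanSpace ℝ (Fin d)))
    (hKconv : Convex ℝ K) (hKcomp : IsCompact K)
    (D L : ℝ) (hD : D = Metric.diam K)
    (f : EuclideanSpace ℝ (Fin d) → ℝ)
    (hconv : ConvexOn ℝ K f)
    (hdiff : Differentiable ℝ f)
    (hsmooth : ∀ x ∈ K, ∀ y ∈ K, ‖gradient f x - gradient f y‖ ≤ L * ‖x - y‖)
    (xstar : EuclideanSpace ℝ (Fin d)) (hxstarK : xstar ∈ K)
    (hmin : ∀ y ∈ K, f xstar ≤ f y)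
    (x : EuclideanSpace ℝ (Fin d)) (hx : x ∈ K)
    (gbar : EuclideanSpace ℝ (Fin d))
    (v : EuclideanSpace ℝ (Fin d)) (hv : v ∈ K)
    (hvopt : ∀ u ∈ K, ⟪v, gbar⟫ ≤ ⟪u, gbar⟫)
    (η : ℝ) (hη0 : 0 ≤ η) (hη1 : η ≤ 1)
    (xplus : EuclideanSpace ℝ (Fin d)) (hxplus : xplus = x + η • (v - x)) :
    f xplus - f xstar ≤ (1 - η) * (f x - f xstar)
      + η * D * ‖gradient f x - gbar‖ + L / 2 * η ^ 2 * D ^ 2 :=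
  stmt5_general K hKconv hKcomp D L hD f hconv hdiff hsmooth xstar hxstarK x hx gbar v hv hvopt η
    hη0 hη1 xplus hxplus
end

section
/- (Induction step in the proof of Theorem 1) Let M₀ > 0 and Q₀ ≥ 2·4^{1/3}·M₀. Suppose {h_t}_{t=1}^{T+1} are nonnegative reals with h_1 ≤ 2M₀ and h_{t+1} ≤ (1 − 2/(t+3))·h_t + Q₀/(t+3)^{4/3} for every 1 ≤ t ≤ T. Then h_t ≤ Q₀/(t+3)^{1/3} for every 1 ≤ t ≤ T+1. -/
/-- induction step in the proof of Theorem 1. Let `M₀ > 0` and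
`Q₀ ≥ 2·4^(1/3)·M₀`. If `h t ≥ 0` for `1 ≤ t ≤ T+1`, `h 1 ≤ 2M₀` and
`h (t+1) ≤ (1 - 2/(t+3))·h t + Q₀/(t+3)^(4/3)` for `1 ≤ t ≤ T`, then
`h t ≤ Q₀/(t+3)^(1/3)` for every `1 ≤ t ≤ T+1`. -/
theorem stmt8 (M₀ Q₀ : ℝ) (hM₀ : 0 < M₀)
    (hQ₀ : 2 * (4 : ℝ) ^ ((1 : ℝ) / 3) * M₀ ≤ Q₀)
    (T : ℕ) (h : ℕ → ℝ)
    (hnonneg : ∀ t, 1 ≤ t → t ≤ T + 1 → 0 ≤ h t)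
    (h1 : h 1 ≤ 2 * M₀)
    (hrec : ∀ t, 1 ≤ t → t ≤ T →
      h (t + 1) ≤ (1 - 2 / ((t : ℝ) + 3)) * h t + Q₀ / ((t : ℝ) + 3) ^ ((4 : ℝ) / 3)) :
    ∀ t, 1 ≤ t → t ≤ T + 1 → h t ≤ Q₀ / ((t : ℝ) + 3) ^ ((1 : ℝ) / 3) := by
  have h4 : (0:ℝ) < (4:ℝ) ^ ((1:ℝ)/3) := by positivity
  have hQ0 : 0 < Q₀ := lt_of_lt_of_le (by positivity) hQ₀
  intro t
  induction t with
  | zero => intro h0; omega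
  | succ n ih =>
    intro _ hle
    rcases Nat.eq_zero_or_pos n with hn | hn
    · subst hn
      have e : (((0:ℕ)+1:ℕ):ℝ) + 3 = 4 := by push_cast; ring
      rw [e]
      calc h 1 ≤ 2 * M₀ := h1
        _ ≤ Q₀ / (4:ℝ) ^ ((1:ℝ)/3) := by
            rw [le_div_iff₀ h4]; nlinarith
    · have hnT : n ≤ T := by omega
      have ihn := ih hn (by omega)
      have hrecn := hrec n hn hnT
      set x := (n:ℝ) with hxdef
      have hx : (1:ℝ) ≤ x := by rw [hxdef]; exact_mod_cast hn
      have ha : (0:ℝ) < x + 3 := by linarith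
      have hb : (0:ℝ) < x + 4 := by linarith
      have ha13 : (0:ℝ) < (x+3) ^ ((1:ℝ)/3) := by positivity
      have hb13 : (0:ℝ) < (x+4) ^ ((1:ℝ)/3) := by positivity
      have ha43 : (x+3) ^ ((4:ℝ)/3) = (x+3) * (x+3) ^ ((1:ℝ)/3) := by
        rw [show (4:ℝ)/3 = 1 + 1/3 by norm_num, Real.rpow_add ha, Real.rpow_one]
      have ha43pos : (0:ℝ) < (x+3) ^ ((4:ℝ)/3) := by positivity
      have hcoef : (0:ℝ) ≤ 1 - 2 / (x+3) := by
        rw [sub_nonneg, div_le_one ha]; linarith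
      have step1 : h (n+1) ≤ (1 - 2/(x+3)) * (Q₀ / (x+3) ^ ((1:ℝ)/3)) + Q₀ / (x+3) ^ ((4:ℝ)/3) := by
        have := mul_le_mul_of_nonneg_left ihn hcoef
        linarith
      have step2 : (1 - 2/(x+3)) * (Q₀ / (x+3) ^ ((1:ℝ)/3)) + Q₀ / (x+3) ^ ((4:ℝ)/3)
          = Q₀ * (x+2) / (x+3) ^ ((4:ℝ)/3) := by
        rw [ha43]; field_simp; ring
      have keycube : ((x+2) * (x+4) ^ ((1:ℝ)/3)) ^ (3:ℕ) ≤ ((x+3) ^ ((4:ℝ)/3)) ^ (3:ℕ) := by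
        have e1 : ((x+4) ^ ((1:ℝ)/3)) ^ (3:ℕ) = x + 4 := by
          rw [← Real.rpow_natCast ((x+4) ^ ((1:ℝ)/3)) 3, ← Real.rpow_mul hb.le]
          norm_num
        have e2 : ((x+3) ^ ((4:ℝ)/3)) ^ (3:ℕ) = (x+3) ^ (4:ℕ) := by
          rw [← Real.rpow_natCast ((x+3) ^ ((4:ℝ)/3)) 3, ← Real.rpow_mul ha.le,
            show ((4:ℝ)/3 * (3:ℕ)) = ((4:ℕ):ℝ) by norm_num, Real.rpow_natCast]
        rw [mul_pow, e1, e2]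
        nlinarith [sq_nonneg x, sq_nonneg (x+1)]
      have key : (x+2) * (x+4) ^ ((1:ℝ)/3) ≤ (x+3) ^ ((4:ℝ)/3) :=
        le_of_pow_le_pow_left₀ (by norm_num) ha43pos.le keycube
      have step3 : Q₀ * (x+2) / (x+3) ^ ((4:ℝ)/3) ≤ Q₀ / (x+4) ^ ((1:ℝ)/3) := by
        rw [div_le_div_iff₀ ha43pos hb13]
        nlinarith [mul_le_mul_of_nonneg_left key hQ0.le]
      have ecast : ((n+1:ℕ):ℝ) + 3 = x + 4 := by push_cast; ring
      rw [ecast]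
      calc h (n+1) ≤ Q₀ * (x+2) / (x+3) ^ ((4:ℝ)/3) := by rw [← step2]; exact step1
        _ ≤ Q₀ / (x+4) ^ ((1:ℝ)/3) := step3
end

section
/- (Per-iteration inequality for Frank-Wolfe with an inexact gradient, non-convex case) Let K ⊆ ℝ^d be a convex compact set with diameter D = sup_{x,y∈K}‖x−y‖, and let f : ℝ^d → ℝ be differentiable with L-Lipschitz gradient on K. Let x ∈ K, let ḡ ∈ ℝ^d, let v ∈ K satisfy ⟨v, ḡ⟩ ≤ ⟨u, ḡ⟩ for all u ∈ K, let η ∈ [0,1], and set x⁺ = x + η(v − x). Then η·G(x) ≤ f(x) − f(x⁺) + η·D·‖∇f(x) − ḡ‖ + (L/2)·η²·D², where G(x) = max_{u∈K} ⟨u − x, −∇f(x)⟩ is the Frank-Wolfe gap of f at x. -/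
/-!
By the descent lemma for a function with `L`-Lipschitz gradient,
`f x⁺ ≤ f x - η ⟪v - x, -∇f x⟫ + (L/2) η² ‖v - x‖²`. Writing `-∇f x = (ḡ - ∇f x) - ḡ`, the
minimality of `v` for `⟪·, ḡ⟫` and Cauchy–Schwarz give
`⟪u - x, -∇f x⟫ ≤ ⟪v - x, -∇f x⟫ + D ‖∇f x - ḡ‖` for every `u ∈ K`, hence the same bound for
the gap `G x`. Multiplying by `η` and using `‖v - x‖ ≤ D` yields the inequality.
-/

open scoped RealInnerProductSpace

/-- The Frank-Wolfe gap of `f` over `K` at `x`: `G(x) = sup_{u ∈ K} ⟪u - x, -∇f x⟫`. -/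
noncomputable def fwGap {d : ℕ} (K : Set (EuclideanSpace ℝ (Fin d)))
    (f : EuclideanSpace ℝ (Fin d) → ℝ) (x : EuclideanSpace ℝ (Fin d)) : ℝ :=
  sSup ((fun u => ⟪u - x, -gradient f x⟫) '' K)

open Set

theorem Convex.apply_le_add_inner_gradient_add_sq {E : Type*} [NormedAddCommGroup E]
    [InnerProductSpace ℝ E] [CompleteSpace E] {f : E → ℝ} {s : Set E} {L : ℝ} (hs : Convex ℝ s)
    (hf : ∀ z ∈ s, DifferentiableAt ℝ f z)
    (hL : ∀ a ∈ s, ∀ b ∈ s, ‖gradient f a - gradient f b‖ ≤ L * ‖a - b‖)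
    {x y : E} (hx : x ∈ s) (hy : y ∈ s) :
    f y ≤ f x + ⟪gradient f x, y - x⟫ + L / 2 * ‖y - x‖ ^ 2 := by
  set h := y - x
  have hseg : ∀ t ∈ Icc (0 : ℝ) 1, x + t • h ∈ s := fun t ht => hs.add_smul_sub_mem hx hy ht
  -- the claim is `φ 1 ≤ φ 0`; `φ' ≤ 0` on `[0, 1]` by Cauchy–Schwarz and the Lipschitz bound
  let φ : ℝ → ℝ := fun t => f (x + t • h) - t * ⟪gradient f x, h⟫ - L / 2 * t ^ 2 * ‖h‖ ^ 2
  let φ' : ℝ → ℝ := fun t => ⟪gradient f (x + t • h), h⟫ - ⟪gradient f x, h⟫ - L * t * ‖h‖ ^ 2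
  have hφ : ∀ t ∈ Icc (0 : ℝ) 1, HasDerivAt φ (φ' t) t := by
    intro t ht
    have hline : HasDerivAt (fun t : ℝ => x + t • h) h t := by
      simpa using ((hasDerivAt_id t).smul_const h).const_add x
    have hcomp := (hf _ (hseg t ht)).hasGradientAt.hasFDerivAt.comp_hasDerivAt t hline
    rw [InnerProductSpace.toDual_apply_apply] at hcomp
    have := (hcomp.sub ((hasDerivAt_id t).mul_const ⟪gradient f x, h⟫)).sub
      (((hasDerivAt_pow 2 t).const_mul (L / 2)).mul_const (‖h‖ ^ 2))
    refine this.congr_deriv ?_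
    simp only [φ']
    ring
  have hφ'_nonpos : ∀ t ∈ Icc (0 : ℝ) 1, φ' t ≤ 0 := by
    intro t ht
    have hlip : ‖gradient f (x + t • h) - gradient f x‖ ≤ L * (t * ‖h‖) := by
      simpa [norm_smul, abs_of_nonneg ht.1] using hL _ (hseg t ht) x hx
    have := real_inner_le_norm (gradient f (x + t • h) - gradient f x) h
    rw [inner_sub_left] at this
    nlinarith [norm_nonneg h]
  have hanti : AntitoneOn φ (Icc 0 1) :=
    antitoneOn_of_hasDerivWithinAt_nonpos (convex_Icc 0 1)
      (fun t ht => (hφ t ht).continuousAt.continuousWithinAt)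
      (fun t ht => (hφ t (interior_subset ht)).hasDerivWithinAt)
      (fun t ht => hφ'_nonpos t (interior_subset ht))
  have h01 := hanti (left_mem_Icc.2 zero_le_one) (right_mem_Icc.2 zero_le_one) zero_le_one
  have hxy : x + h = y := add_sub_cancel x y
  simp only [φ, zero_smul, add_zero, one_smul, hxy, zero_mul, sub_zero, one_mul, one_pow, mul_one,
    zero_pow two_ne_zero, mul_zero] at h01
  linarith

theorem mul_norm_sub_sq_le_mul_diam_sq {E F : Type*} [NormedAddCommGroup E]
    [SeminormedAddCommGroup F] {g : E → F} {s : Set E} {L : ℝ} (hs : Bornology.IsBounded s)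
    (hL : ∀ a ∈ s, ∀ b ∈ s, ‖g a - g b‖ ≤ L * ‖a - b‖) {a b : E} (ha : a ∈ s) (hb : b ∈ s) :
    L * ‖a - b‖ ^ 2 ≤ L * Metric.diam s ^ 2 := by
  rcases s.subsingleton_or_nontrivial with hsub | ⟨c, hc, c', hc', hcc'⟩
  · simp [hsub ha hb, Metric.diam_subsingleton hsub]
  · have hL0 : 0 ≤ L := by
      have hpos : 0 < ‖c - c'‖ := norm_pos_iff.2 (sub_ne_zero.2 hcc')
      have := (norm_nonneg _).trans (hL c hc c' hc')
      exact nonneg_of_mul_nonneg_left this hpos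
    gcongr
    rw [← dist_eq_norm]
    exact Metric.dist_le_diam_of_mem hs ha hb

theorem fwGap_le_inner_add_diam_mul {d : ℕ} {K : Set (EuclideanSpace ℝ (Fin d))}
    (hK : Bornology.IsBounded K) {f : EuclideanSpace ℝ (Fin d) → ℝ}
    {x gbar v : EuclideanSpace ℝ (Fin d)} (hv : v ∈ K) (hvopt : ∀ u ∈ K, ⟪v, gbar⟫ ≤ ⟪u, gbar⟫) :
    fwGap K f x ≤ ⟪v - x, -gradient f x⟫ + Metric.diam K * ‖gradient f x - gbar‖ := by
  refine csSup_le ⟨_, mem_image_of_mem _ hv⟩ ?_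
  rintro _ ⟨u, hu, rfl⟩
  have hsplit : ⟪u - x, -gradient f x⟫
      = ⟪v - x, -gradient f x⟫ + ⟪u - v, gbar - gradient f x⟫ - (⟪u, gbar⟫ - ⟪v, gbar⟫) := by
    simp only [inner_sub_left, inner_sub_right, inner_neg_right]
    ring
  have hcs : ⟪u - v, gbar - gradient f x⟫ ≤ Metric.diam K * ‖gradient f x - gbar‖ :=
    calc ⟪u - v, gbar - gradient f x⟫ ≤ ‖u - v‖ * ‖gradient f x - gbar‖ := by
          rw [norm_sub_rev (gradient f x)]; exact real_inner_le_norm _ _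
      _ ≤ Metric.diam K * ‖gradient f x - gbar‖ := by
          gcongr
          rw [← dist_eq_norm]
          exact Metric.dist_le_diam_of_mem hK hu hv
  linarith [hvopt u hu]

/-- per-iteration inequality for Frank-Wolfe with an inexact gradient,
non-convex case. `K ⊆ ℝ^d` convex compact with diameter `D`, `f` differentiable with
`L`-Lipschitz gradient on `K`, `x ∈ K`, `v ∈ K` a linear minimizer for `ḡ`,
`η ∈ [0,1]`, `x⁺ = x + η(v - x)`. Then
`η·G(x) ≤ f x - f x⁺ + η·D·‖∇f x - ḡ‖ + (L/2)·η²·D²`, where `G` is the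
Frank-Wolfe gap. -/
theorem stmt10 {d : ℕ} (K : Set (EuclideanSpace ℝ (Fin d)))
    (hKconv : Convex ℝ K) (hKcomp : IsCompact K)
    (D L : ℝ) (hD : D = Metric.diam K)
    (f : EuclideanSpace ℝ (Fin d) → ℝ)
    (hdiff : Differentiable ℝ f)
    (hsmooth : ∀ x ∈ K, ∀ y ∈ K, ‖gradient f x - gradient f y‖ ≤ L * ‖x - y‖)
    (x : EuclideanSpace ℝ (Fin d)) (hx : x ∈ K)
    (gbar : EuclideanSpace ℝ (Fin d))
    (v : EuclideanSpace ℝ (Fin d)) (hv : v ∈ K)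
    (hvopt : ∀ u ∈ K, ⟪v, gbar⟫ ≤ ⟪u, gbar⟫)
    (η : ℝ) (hη0 : 0 ≤ η) (hη1 : η ≤ 1)
    (xplus : EuclideanSpace ℝ (Fin d)) (hxplus : xplus = x + η • (v - x)) :
    η * fwGap K f x ≤ f x - f xplus
      + η * D * ‖gradient f x - gbar‖ + L / 2 * η ^ 2 * D ^ 2 := by
  subst hD hxplus
  have hstep : x + η • (v - x) ∈ K := hKconv.add_smul_sub_mem hx hv ⟨hη0, hη1⟩
  have hdescent := hKconv.apply_le_add_inner_gradient_add_sq (fun z _ => hdiff z) hsmooth hx hstep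
  have hgap := fwGap_le_inner_add_diam_mul (f := f) (x := x) hKcomp.isBounded hv hvopt
  have hquad := mul_norm_sub_sq_le_mul_diam_sq hKcomp.isBounded hsmooth hv hx
  have hinner : ⟪gradient f x, x + η • (v - x) - x⟫ = -(η * ⟪v - x, -gradient f x⟫) := by
    rw [add_sub_cancel_left, real_inner_smul_right, inner_neg_right, real_inner_comm]
    ring
  have hnorm : ‖x + η • (v - x) - x‖ ^ 2 = η ^ 2 * ‖v - x‖ ^ 2 := by
    rw [add_sub_cancel_left, norm_smul, Real.norm_of_nonneg hη0, mul_pow]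
  rw [hinner, hnorm] at hdescent
  nlinarith [mul_le_mul_of_nonneg_left hgap hη0, mul_le_mul_of_nonneg_left hquad (sq_nonneg η)]
end

section
/- (Variance of the mini-batch SPIDER gradient-difference estimator) Let f_1,…,f_N : ℝ^d → ℝ be differentiable with L-Lipschitz gradients, and let f = (1/N)∑_{i=1}^N f_i. Fix x, y ∈ ℝ^d. Let i_1,…,i_S be independent indices, each uniformly distributed on {1,…,N}, and set Δ = (1/S)∑_{j=1}^S (∇f_{i_j}(x) − ∇f_{i_j}(y)). Then E[Δ] = ∇f(x) − ∇f(y) and E[‖Δ − (∇f(x) − ∇f(y))‖²] ≤ L²·‖x − y‖²/S. -/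
/-!
The estimator `Δ` is the average of `S` pairwise independent copies of the random vector
`g(i) = ∇fᵢ(x) - ∇fᵢ(y)`, `i` uniform, whose mean is `∇f(x) - ∇f(y)`. Independence kills the
cross terms in `E‖∑ⱼ (gⱼ - E gⱼ)‖²`, so the variance of the average is `1/S` times the variance
of one copy, which is at most its second moment `E‖g‖² ≤ L²‖x - y‖²`.
-/

open MeasureTheory ProbabilityTheory
open scoped ProbabilityTheory RealInnerProductSpace

lemma gradient_const_mul_sum {E ι : Type*} [NormedAddCommGroup E] [InnerProductSpace ℝ E]
    [CompleteSpace E] (s : Finset ι) (c : ℝ) {f : ι → E → ℝ} {z : E}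
    (hf : ∀ i ∈ s, DifferentiableAt ℝ (f i) z) :
    gradient (fun w => c * ∑ i ∈ s, f i w) z = c • ∑ i ∈ s, gradient (f i) z := by
  have hderiv := (HasFDerivAt.fun_sum fun i hi => (hf i hi).hasGradientAt.hasFDerivAt).const_mul c
  rw [hderiv.hasGradientAt.gradient]
  simp only [map_smul, map_sum, LinearIsometryEquiv.symm_apply_apply]

section NormedSpace

variable {Ω α E : Type*} {mΩ : MeasurableSpace Ω} {μ : Measure Ω} [NormedAddCommGroup E]

lemma integral_comp_of_uniform [NormedSpace ℝ E] [CompleteSpace E] [IsFiniteMeasure μ]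
    [Fintype α] [MeasurableSpace α] [DiscreteMeasurableSpace α] {X : Ω → α} (hX : Measurable X)
    (hunif : ∀ a, μ {ω | X ω = a} = (Fintype.card α : ENNReal)⁻¹) (φ : α → E) :
    ∫ ω, φ (X ω) ∂μ = (Fintype.card α : ℝ)⁻¹ • ∑ a, φ a := by
  rw [← integral_map hX.aemeasurable StronglyMeasurable.of_discrete.aestronglyMeasurable,
    integral_fintype Integrable.of_finite, Finset.smul_sum]
  refine Finset.sum_congr rfl fun a _ => ?_
  rw [measureReal_def, Measure.map_apply hX (measurableSet_singleton a)]
  simp [Set.preimage, hunif]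

lemma memLp_comp_of_finite [IsFiniteMeasure μ] [Finite α] [MeasurableSpace α]
    [DiscreteMeasurableSpace α] {X : Ω → α} (hX : Measurable X) (φ : α → E) (p : ENNReal) :
    MemLp (fun ω => φ (X ω)) p μ :=
  MemLp.of_discrete.comp_of_map hX.aemeasurable

lemma integral_average_of_integral_eq [NormedSpace ℝ E] {ι : Type*} [Fintype ι] [Nonempty ι]
    {Y : ι → Ω → E}
    (hY : ∀ j, Integrable (Y j) μ) {m : E} (hmean : ∀ j, ∫ ω, Y j ω ∂μ = m) :
    ∫ ω, (Fintype.card ι : ℝ)⁻¹ • ∑ j, Y j ω ∂μ = m := by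
  have hn : (Fintype.card ι : ℝ) ≠ 0 := Nat.cast_ne_zero.mpr Fintype.card_ne_zero
  rw [integral_smul, integral_finsetSum _ fun j _ => hY j]
  simp only [hmean, Finset.sum_const, Finset.card_univ]
  rw [← Nat.cast_smul_eq_nsmul ℝ, smul_smul, inv_mul_cancel₀ hn, one_smul]

end NormedSpace

section InnerProductSpace

variable {Ω E : Type*} {mΩ : MeasurableSpace Ω} {μ : Measure Ω}
  [NormedAddCommGroup E] [InnerProductSpace ℝ E]

theorem MeasureTheory.MemLp.integrable_inner {X Y : Ω → E} (hX : MemLp X 2 μ)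
    (hY : MemLp Y 2 μ) : Integrable (fun ω => ⟪X ω, Y ω⟫) μ := by
  refine (hX.norm.integrable_mul hY.norm).mono' (hX.1.inner hY.1) (ae_of_all _ fun ω => ?_)
  simpa using abs_real_inner_le_norm (X ω) (Y ω)

variable [CompleteSpace E]

lemma integral_norm_sub_integral_sq_le [IsProbabilityMeasure μ] {X : Ω → E}
    (hX : MemLp X 2 μ) :
    ∫ ω, ‖X ω - ∫ ω', X ω' ∂μ‖ ^ 2 ∂μ ≤ ∫ ω, ‖X ω‖ ^ 2 ∂μ := by
  set m := ∫ ω, X ω ∂μ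
  have hX2 : Integrable (fun ω => ‖X ω‖ ^ 2) μ := hX.integrable_norm_pow two_ne_zero
  have hXm : Integrable (fun ω => 2 * ⟪m, X ω⟫) μ :=
    ((hX.integrable one_le_two).const_inner m).const_mul 2
  have hexpand : ∫ ω, ‖X ω - m‖ ^ 2 ∂μ = ∫ ω, ‖X ω‖ ^ 2 ∂μ - ‖m‖ ^ 2 := by
    simp_rw [norm_sub_sq_real, real_inner_comm m]
    rw [integral_add (f := fun ω => ‖X ω‖ ^ 2 - 2 * ⟪m, X ω⟫) (hX2.sub hXm)
      (integrable_const _), integral_sub hX2 hXm, integral_const_mul,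
      integral_inner (hX.integrable one_le_two), real_inner_self_eq_norm_sq]
    simp only [integral_const, probReal_univ, one_smul]
    ring
  linarith [sq_nonneg ‖m‖]

lemma integral_norm_sum_sq_of_indepFun [IsFiniteMeasure μ] [MeasurableSpace E] [BorelSpace E]
    {ι : Type*} [Fintype ι] {X : ι → Ω → E}
    (hX : ∀ j, MemLp (X j) 2 μ) (hindep : Pairwise fun j k => IndepFun (X j) (X k) μ)
    (hmean : ∀ j, ∫ ω, X j ω ∂μ = 0) :
    ∫ ω, ‖∑ j, X j ω‖ ^ 2 ∂μ = ∑ j, ∫ ω, ‖X j ω‖ ^ 2 ∂μ := by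
  have hcross : ∀ j k, j ≠ k → ∫ ω, ⟪X j ω, X k ω⟫ ∂μ = 0 := fun j k hjk =>
    ((hindep hjk).integral_bilin ((hX j).integrable one_le_two)
      ((hX k).integrable one_le_two) (innerSL ℝ)).trans (by simp [hmean])
  simp_rw [← real_inner_self_eq_norm_sq, sum_inner, inner_sum]
  rw [integral_finsetSum _ fun j _ => integrable_finsetSum _ fun k _ =>
    (hX j).integrable_inner (hX k)]
  refine Finset.sum_congr rfl fun j _ => ?_
  rw [integral_finsetSum _ fun k _ => (hX j).integrable_inner (hX k),
    Finset.sum_eq_single j (fun k _ hkj => hcross j k hkj.symm) (by simp)]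

lemma integral_norm_average_sub_sq_le [IsProbabilityMeasure μ] [MeasurableSpace E]
    [BorelSpace E] {ι : Type*} [Fintype ι] [Nonempty ι] {Y : ι → Ω → E}
    (hY : ∀ j, MemLp (Y j) 2 μ) (hindep : Pairwise fun j k => IndepFun (Y j) (Y k) μ) {m : E}
    (hmean : ∀ j, ∫ ω, Y j ω ∂μ = m) {C : ℝ} (hC : ∀ j, ∫ ω, ‖Y j ω‖ ^ 2 ∂μ ≤ C) :
    ∫ ω, ‖(Fintype.card ι : ℝ)⁻¹ • ∑ j, Y j ω - m‖ ^ 2 ∂μ ≤ C / Fintype.card ι := by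
  set n : ℝ := (Fintype.card ι : ℝ) with hn_def
  have hn : 0 < n := Nat.cast_pos.mpr Fintype.card_pos
  have hcenter : ∀ ω, n⁻¹ • ∑ j, Y j ω - m = n⁻¹ • ∑ j, (Y j ω - m) := fun ω => by
    rw [Finset.sum_sub_distrib, smul_sub, Finset.sum_const, Finset.card_univ,
      ← Nat.cast_smul_eq_nsmul ℝ, smul_smul, inv_mul_cancel₀ hn.ne', one_smul]
  have hX : ∀ j, MemLp (fun ω => Y j ω - m) 2 μ := fun j => (hY j).sub (memLp_const m)
  have hXindep : Pairwise fun j k => IndepFun (fun ω => Y j ω - m) (fun ω => Y k ω - m) μ :=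
    fun j k hjk => (hindep hjk).comp (measurable_id.sub_const m) (measurable_id.sub_const m)
  have hXmean : ∀ j, ∫ ω, Y j ω - m ∂μ = 0 := fun j => by
    rw [integral_sub ((hY j).integrable one_le_two) (integrable_const m), hmean]
    simp
  calc ∫ ω, ‖n⁻¹ • ∑ j, Y j ω - m‖ ^ 2 ∂μ
      = n⁻¹ ^ 2 * ∫ ω, ‖∑ j, (Y j ω - m)‖ ^ 2 ∂μ := by
        simp_rw [hcenter, norm_smul, mul_pow, Real.norm_eq_abs, sq_abs, integral_const_mul]
    _ = n⁻¹ ^ 2 * ∑ j, ∫ ω, ‖Y j ω - m‖ ^ 2 ∂μ := by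
        rw [integral_norm_sum_sq_of_indepFun hX hXindep hXmean]
    _ ≤ n⁻¹ ^ 2 * ∑ _j : ι, C := by
        gcongr with j
        exact (hmean j ▸ integral_norm_sub_integral_sq_le (hY j)).trans (hC j)
    _ = C / n := by
        rw [Finset.sum_const, Finset.card_univ, nsmul_eq_mul, ← hn_def]
        field_simp

end InnerProductSpace

theorem stmt12_general {Ω : Type*} [MeasureSpace Ω] [IsProbabilityMeasure (ℙ : Measure Ω)]
    {dd : ℕ} (N S : ℕ) (hS : 0 < S) (L : ℝ)
    (fi : Fin N → EuclideanSpace ℝ (Fin dd) → ℝ)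
    (hdiff : ∀ i, Differentiable ℝ (fi i))
    (hlip : ∀ i, ∀ x y, ‖gradient (fi i) x - gradient (fi i) y‖ ≤ L * ‖x - y‖)
    (f : EuclideanSpace ℝ (Fin dd) → ℝ)
    (hf : f = fun z => (N : ℝ)⁻¹ * ∑ i, fi i z)
    (x y : EuclideanSpace ℝ (Fin dd))
    (idx : Fin S → Ω → Fin N)
    (hidxmeas : ∀ j, Measurable (idx j))
    (hidxunif : ∀ j, ∀ k : Fin N, ℙ {ω | idx j ω = k} = (N : ENNReal)⁻¹)
    (hidxindep : iIndepFun idx ℙ)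
    (Δ : Ω → EuclideanSpace ℝ (Fin dd))
    (hΔ : ∀ ω, Δ ω = (S : ℝ)⁻¹ •
      ∑ j, (gradient (fi (idx j ω)) x - gradient (fi (idx j ω)) y)) :
    (∫ ω, Δ ω) = gradient f x - gradient f y ∧
      (∫ ω, ‖Δ ω - (gradient f x - gradient f y)‖ ^ 2)
        ≤ L ^ 2 * ‖x - y‖ ^ 2 / S := by
  set g : Fin N → EuclideanSpace ℝ (Fin dd) := fun k => gradient (fi k) x - gradient (fi k) y
  have : Nonempty (Fin S) := ⟨⟨0, hS⟩⟩
  have hΔ' : Δ = fun ω => (Fintype.card (Fin S) : ℝ)⁻¹ • ∑ j, g (idx j ω) := by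
    funext ω
    rw [hΔ, Fintype.card_fin]
  have hY : ∀ j, MemLp (fun ω => g (idx j ω)) 2 ℙ := fun j =>
    memLp_comp_of_finite (hidxmeas j) g 2
  have hindep : Pairwise fun j k => IndepFun (fun ω => g (idx j ω)) (fun ω => g (idx k ω)) ℙ :=
    fun j k hjk => (hidxindep.indepFun hjk).comp (measurable_of_finite g) (measurable_of_finite g)
  have hmean : ∀ j, ∫ ω, g (idx j ω) = gradient f x - gradient f y := fun j => by
    rw [integral_comp_of_uniform (hidxmeas j) (by simpa using hidxunif j), Fintype.card_fin, hf,
      gradient_const_mul_sum _ _ fun i _ => (hdiff i).differentiableAt,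
      gradient_const_mul_sum _ _ fun i _ => (hdiff i).differentiableAt, ← smul_sub,
      ← Finset.sum_sub_distrib]
  have hsecond : ∀ j, ∫ ω, ‖g (idx j ω)‖ ^ 2 ≤ L ^ 2 * ‖x - y‖ ^ 2 := fun j => by
    refine (integral_mono (hY j).integrable_norm_pow' (integrable_const (L ^ 2 * ‖x - y‖ ^ 2))
      fun ω => ?_).trans_eq (by simp)
    simpa only [mul_pow] using pow_le_pow_left₀ (norm_nonneg _) (hlip (idx j ω) x y) 2
  rw [hΔ']
  refine ⟨integral_average_of_integral_eq (fun j => (hY j).integrable one_le_two) hmean, ?_⟩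
  simpa using integral_norm_average_sub_sq_le hY hindep hmean hsecond

/-- variance of the mini-batch SPIDER gradient-difference estimator.
Let `fi 1, …, fi N : ℝ^d → ℝ` be differentiable with `L`-Lipschitz gradients and
`f = (1/N)∑ fi i`. Fix `x, y`. Let `idx 1, …, idx S` be independent uniform indices
on `Fin N` and `Δ ω = (1/S)∑ⱼ (∇fi (idx j ω) x - ∇fi (idx j ω) y)`. Then
`E[Δ] = ∇f x - ∇f y` and `E[‖Δ - (∇f x - ∇f y)‖²] ≤ L²‖x - y‖²/S`. -/
theorem stmt12 {Ω : Type*} [MeasureSpace Ω] [IsProbabilityMeasure (ℙ : Measure Ω)]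
    {dd : ℕ} (N S : ℕ) (hN : 0 < N) (hS : 0 < S) (L : ℝ)
    (fi : Fin N → EuclideanSpace ℝ (Fin dd) → ℝ)
    (hdiff : ∀ i, Differentiable ℝ (fi i))
    (hlip : ∀ i, ∀ x y, ‖gradient (fi i) x - gradient (fi i) y‖ ≤ L * ‖x - y‖)
    (f : EuclideanSpace ℝ (Fin dd) → ℝ)
    (hf : f = fun z => (N : ℝ)⁻¹ * ∑ i, fi i z)
    (x y : EuclideanSpace ℝ (Fin dd))
    (idx : Fin S → Ω → Fin N)
    (hidxmeas : ∀ j, Measurable (idx j))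
    (hidxunif : ∀ j, ∀ k : Fin N, ℙ {ω | idx j ω = k} = (N : ENNReal)⁻¹)
    (hidxindep : iIndepFun idx ℙ)
    (Δ : Ω → EuclideanSpace ℝ (Fin dd))
    (hΔ : ∀ ω, Δ ω = (S : ℝ)⁻¹ •
      ∑ j, (gradient (fi (idx j ω)) x - gradient (fi (idx j ω)) y)) :
    (∫ ω, Δ ω) = gradient f x - gradient f y ∧
      (∫ ω, ‖Δ ω - (gradient f x - gradient f y)‖ ^ 2)
        ≤ L ^ 2 * ‖x - y‖ ^ 2 / S :=
  stmt12_general N S hS L fi hdiff hlip f hf x y idx hidxmeas hidxunif hidxindep Δ hΔ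
end

section
/- (Induction step in the proof of Theorem 3) Let p ∈ ℕ⁺, M₀ > 0, Q > 0, and set Q₀ = max{6pM₀, 3Q}. Suppose {z_k}_{k≥0} are nonnegative reals with z_k ≤ 2M₀ for k = 0, 1, 2, and z_k ≤ (1 − 4/(3k))·z_{k−1} + Q/(p·k²) for every integer k ≥ 3. Then z_k ≤ Q₀/((k+1)·p) for every k ≥ 0. -/
/-- induction step in the proof of Theorem 3. Let `p ≥ 1`, `M₀ > 0`,
`Q > 0`, `Q₀ = max (6pM₀) (3Q)`. If `z k ≥ 0` for all `k`, `z k ≤ 2M₀` for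
`k = 0, 1, 2`, and `z k ≤ (1 - 4/(3k))·z (k-1) + Q/(p·k²)` for every `k ≥ 3`, then
`z k ≤ Q₀/((k+1)·p)` for every `k ≥ 0`. -/
theorem stmt17 (p : ℕ) (hp : 1 ≤ p) (M₀ Q : ℝ) (hM₀ : 0 < M₀) (hQ : 0 < Q)
    (Q₀ : ℝ) (hQ₀ : Q₀ = max (6 * p * M₀) (3 * Q))
    (z : ℕ → ℝ) (hznonneg : ∀ k, 0 ≤ z k)
    (hz0 : z 0 ≤ 2 * M₀) (hz1 : z 1 ≤ 2 * M₀) (hz2 : z 2 ≤ 2 * M₀)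
    (hrec : ∀ k, 3 ≤ k →
      z k ≤ (1 - 4 / (3 * (k : ℝ))) * z (k - 1) + Q / ((p : ℝ) * (k : ℝ) ^ 2)) :
    ∀ k, z k ≤ Q₀ / (((k : ℝ) + 1) * p) := by
  have hp' : (1:ℝ) ≤ p := by exact_mod_cast hp
  have hppos : (0:ℝ) < p := by linarith
  have h6 : 6 * p * M₀ ≤ Q₀ := hQ₀ ▸ le_max_left _ _
  have h3 : 3 * Q ≤ Q₀ := hQ₀ ▸ le_max_right _ _
  have base : ∀ c : ℝ, 1 ≤ c → c ≤ 3 → 2 * M₀ ≤ Q₀ / (c * p) := by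
    intro c h1 h2
    rw [le_div_iff₀ (by positivity)]
    nlinarith
  intro k
  induction k with
  | zero =>
    norm_num
    exact hz0.trans (by simpa using base 1 le_rfl (by norm_num))
  | succ n ih =>
    rcases Nat.lt_or_ge n 2 with h | h
    · interval_cases n
      · refine hz1.trans ?_
        norm_num
        simpa using base 2 (by norm_num) (by norm_num)
      · refine hz2.trans ?_
        norm_num
        simpa using base 3 (by norm_num) le_rfl
    · have hrec' := hrec (n+1) (by omega)
      simp only [Nat.add_sub_cancel] at hrec'
      set K : ℝ := (n:ℝ) + 1 with hKdef
      have hK3 : (3:ℝ) ≤ K := by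
        have : (2:ℝ) ≤ (n:ℝ) := by exact_mod_cast h
        simp [hKdef]; linarith
      have hKpos : (0:ℝ) < K := by linarith
      have hcast : ((n+1 : ℕ) : ℝ) = K := by push_cast [hKdef]; ring
      rw [hcast] at hrec'
      have hcoef : 0 ≤ 1 - 4 / (3 * K) := by
        rw [sub_nonneg, div_le_one (by linarith)]; linarith
      have ih' : (1 - 4 / (3 * K)) * z n ≤ (1 - 4 / (3 * K)) * (Q₀ / (K * p)) := by
        apply mul_le_mul_of_nonneg_left _ hcoef
        simpa [hKdef] using ih
      have hpK2 : (0:ℝ) < (p:ℝ) * K ^ 2 := by positivity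
      have hQ' : Q / ((p:ℝ) * K ^ 2) ≤ Q₀ / (3 * ((p:ℝ) * K ^ 2)) := by
        rw [div_le_div_iff₀ (by positivity) (by positivity)]
        nlinarith
      have hQ₀pos : 0 < Q₀ := lt_of_lt_of_le (by positivity) h6
      have key : (1 - 4 / (3 * K)) * (Q₀ / (K * p)) + Q₀ / (3 * ((p:ℝ) * K ^ 2))
          ≤ Q₀ / ((K + 1) * p) := by
        rw [show (1 - 4 / (3 * K)) * (Q₀ / (K * (p:ℝ))) + Q₀ / (3 * ((p:ℝ) * K ^ 2))
            = Q₀ * (K - 1) / ((p:ℝ) * K ^ 2) from by field_simp; ring]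
        rw [div_le_div_iff₀ (by positivity) (by positivity)]
        nlinarith [mul_pos hppos hQ₀pos]
      calc z (n+1) ≤ (1 - 4 / (3 * K)) * z n + Q / ((p:ℝ) * K ^ 2) := hrec'
        _ ≤ (1 - 4 / (3 * K)) * (Q₀ / (K * p)) + Q₀ / (3 * ((p:ℝ) * K ^ 2)) :=
            add_le_add ih' hQ'
        _ ≤ Q₀ / ((K + 1) * p) := key
        _ = Q₀ / ((((n+1:ℕ):ℝ) + 1) * p) := by rw [hcast]
end
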